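/- arXiv:1303.6948 — 5 statements merged into one kernel-verified Lean document; each statement's English description precedes it below -/
import Mathlib

section
/- Under the transmission conditions with ρ₁₂ > 0 and ρ₃₄ > 0, all eigenvalues of the boundary-value-transmission problem -y'' + q·y = λ·y on (-π,0)∪(0,π) with boundary conditions cos α·y(-π) + sin α·y'(-π) = 0, cos β·y(π) + sin β·y'(π) = 0 and transmission conditions Γ₁(y)=Γ₂(y)=0 are real. That is, if λ ∈ ℂ admits a nontrivial complex-valued solution satisfying all conditions, then λ ∈ ℝ. -/
/-!
For an eigenfunction `y` put `g = Im λ · Im (y' ȳ)`. The Lagrange identity gives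
`g' = -(Im λ)² |y|² ≤ 0`, so `g` decreases on each half-interval. The boundary conditions make
`g` vanish at `±π`, hence `g(0⁻) ≤ 0 ≤ g(0⁺)`, while the transmission conditions give
`ρ₁₂ g(0⁻) = ρ₃₄ g(0⁺)`. As `ρ₁₂, ρ₃₄ > 0` both limits vanish, so `g ≡ 0`, and then
`(Im λ)² |y|² = g' = 0`; if `Im λ ≠ 0` this forces `y ≡ 0`.
-/

open Real Set Filter Topology ComplexConjugate

theorem im_mul_conj_real_comb (a b c d : ℝ) (z w : ℂ) :
    ((a * z + b * w) * conj (c * z + d * w)).im = (a * d - b * c) * (z * conj w).im := by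
  simp only [Complex.mul_im, Complex.mul_re, Complex.add_im, Complex.add_re, map_add, map_mul,
    Complex.conj_ofReal, Complex.conj_re, Complex.conj_im, Complex.ofReal_re, Complex.ofReal_im]
  ring

theorem im_mul_conj_eq_zero_of_cos_sin (θ : ℝ) {z w : ℂ}
    (h : (Real.cos θ : ℂ) * z + (Real.sin θ : ℂ) * w = 0) : (w * conj z).im = 0 := by
  have hre : Real.cos θ * z.re + Real.sin θ * w.re = 0 := by
    simpa only [Complex.add_re, Complex.re_ofReal_mul, Complex.zero_re] using congrArg Complex.re h
  have him : Real.cos θ * z.im + Real.sin θ * w.im = 0 := by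
    simpa only [Complex.add_im, Complex.im_ofReal_mul, Complex.zero_im] using congrArg Complex.im h
  rw [Complex.mul_im, Complex.conj_re, Complex.conj_im]
  linear_combination (Real.cos θ * w.im - Real.sin θ * z.im) * hre
    + (Real.sin θ * z.re - Real.cos θ * w.re) * him
    + (w.re * z.im - w.im * z.re) * sin_sq_add_cos_sq θ

theorem transmission_im_mul_conj {a₁ a₂ a₃ a₄ b₁ b₂ b₃ b₄ : ℝ} {zL' zL zR' zR : ℂ}
    (h₁ : (a₁ : ℂ) * zL' + a₂ * zL + a₃ * zR' + a₄ * zR = 0)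
    (h₂ : (b₁ : ℂ) * zL' + b₂ * zL + b₃ * zR' + b₄ * zR = 0) :
    (a₁ * b₂ - a₂ * b₁) * (zL' * conj zL).im = (a₃ * b₄ - a₄ * b₃) * (zR' * conj zR).im := by
  rw [← im_mul_conj_real_comb, ← im_mul_conj_real_comb,
    show (a₁ : ℂ) * zL' + a₂ * zL = -(a₃ * zR' + a₄ * zR) by linear_combination h₁,
    show (b₁ : ℂ) * zL' + b₂ * zL = -(b₃ * zR' + b₄ * zR) by linear_combination h₂,
    map_neg, neg_mul_neg]

theorem le_of_antitoneOn_Ico_of_tendsto {g : ℝ → ℝ} {a b L x : ℝ}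
    (hg : AntitoneOn g (Ico a b)) (hL : Tendsto g (𝓝[<] b) (𝓝 L)) (hx : x ∈ Ico a b) :
    L ≤ g x :=
  le_of_tendsto hL <| by
    filter_upwards [Ioo_mem_nhdsLT hx.2] with t ht
    exact hg hx ⟨hx.1.trans ht.1.le, ht.2⟩ ht.1.le

theorem le_of_antitoneOn_Ioc_of_tendsto {g : ℝ → ℝ} {a b R x : ℝ}
    (hg : AntitoneOn g (Ioc a b)) (hR : Tendsto g (𝓝[>] a) (𝓝 R)) (hx : x ∈ Ioc a b) :
    g x ≤ R :=
  ge_of_tendsto hR <| by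
    filter_upwards [Ioo_mem_nhdsGT hx.1] with t ht
    exact hg ⟨ht.1, ht.2.le.trans hx.2⟩ hx ht.2.le

theorem eqOn_zero_of_antitoneOn_of_tendsto {g : ℝ → ℝ} {a m b L R ρ₁ ρ₂ : ℝ}
    (ham : a < m) (hmb : m < b) (hρ₁ : 0 < ρ₁) (hρ₂ : 0 < ρ₂)
    (hgL : AntitoneOn g (Ico a m)) (hgR : AntitoneOn g (Ioc m b)) (ha : g a = 0) (hb : g b = 0)
    (hL : Tendsto g (𝓝[<] m) (𝓝 L)) (hR : Tendsto g (𝓝[>] m) (𝓝 R))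
    (hLR : ρ₁ * L = ρ₂ * R) : EqOn g 0 (Ico a m ∪ Ioc m b) := by
  have haI : a ∈ Ico a m := ⟨le_rfl, ham⟩
  have hbI : b ∈ Ioc m b := ⟨hmb, le_rfl⟩
  have hL0 : L ≤ 0 := ha ▸ le_of_antitoneOn_Ico_of_tendsto hgL hL haI
  have hR0 : 0 ≤ R := hb ▸ le_of_antitoneOn_Ioc_of_tendsto hgR hR hbI
  have hL' : L = 0 := by nlinarith
  have hR' : R = 0 := by nlinarith
  rintro x (hx | hx) <;> rw [Pi.zero_apply]
  · exact le_antisymm (ha ▸ hgL haI hx hx.1) (hL' ▸ le_of_antitoneOn_Ico_of_tendsto hgL hL hx)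
  · exact le_antisymm (hR' ▸ le_of_antitoneOn_Ioc_of_tendsto hgR hR hx) (hb ▸ hgR hx hbI hx.2)

theorem Ico_union_Ioc_subset_closure {a m b : ℝ} (ham : a < m) (hmb : m < b) :
    Ico a m ∪ Ioc m b ⊆ closure (Ioo a m ∪ Ioo m b) := by
  rw [closure_union, closure_Ioo ham.ne, closure_Ioo hmb.ne]
  exact union_subset_union Ico_subset_Icc_self Ioc_subset_Icc_self

/-- `W(ȳ, y) = 2i · imWronskian y y'`. -/
def imWronskian (y y' : ℝ → ℂ) (x : ℝ) : ℝ := (y' x * conj (y x)).im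

section imWronskian

variable {y y' y'' : ℝ → ℂ} {q : ℝ → ℝ} {lam : ℂ}

theorem ContinuousOn.imWronskian {s : Set ℝ} (hy : ContinuousOn y s) (hy' : ContinuousOn y' s) :
    ContinuousOn (imWronskian y y') s :=
  Complex.continuous_im.comp_continuousOn (hy'.mul (Complex.continuous_conj.comp_continuousOn hy))

theorem Filter.Tendsto.imWronskian {l : Filter ℝ} {z w : ℂ} (hy : Tendsto y l (𝓝 z))
    (hy' : Tendsto y' l (𝓝 w)) : Tendsto (imWronskian y y') l (𝓝 (w * conj z).im) :=
  (Complex.continuous_im.tendsto _).comp (hy'.mul ((Complex.continuous_conj.tendsto _).comp hy))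

theorem hasDerivAt_imWronskian {x : ℝ} (hy : HasDerivAt y (y' x) x)
    (hy' : HasDerivAt y' (y'' x) x) (heq : -y'' x + q x * y x = lam * y x) :
    HasDerivAt (imWronskian y y') (-(lam.im * Complex.normSq (y x))) x := by
  have hprod := hy'.mul hy.star
  refine (Complex.imCLM.hasFDerivAt.comp_hasDerivAt x hprod).congr_deriv ?_
  rw [show y'' x = (q x - lam) * y x by linear_combination -heq]
  simp only [Complex.imCLM_apply, Complex.add_im, Complex.mul_im, Complex.mul_re,
    Complex.sub_re, Complex.sub_im, Complex.ofReal_re, Complex.ofReal_im, Complex.star_def,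
    Complex.conj_re, Complex.conj_im, Complex.normSq_apply]
  ring

theorem antitoneOn_mul_imWronskian {U I : Set ℝ} (hI : Convex ℝ I)
    (hW : ContinuousOn (imWronskian y y') I) (hIU : interior I ⊆ U)
    (hderiv : ∀ x ∈ U, HasDerivAt y (y' x) x ∧ HasDerivAt y' (y'' x) x)
    (heq : ∀ x ∈ U, -y'' x + q x * y x = lam * y x) :
    AntitoneOn (fun x ↦ lam.im * imWronskian y y' x) I := by
  refine antitoneOn_of_hasDerivWithinAt_nonpos hI (continuousOn_const.mul hW)
    (f' := fun x ↦ -(lam.im ^ 2 * Complex.normSq (y x))) (fun x hx ↦ ?_) fun x _ ↦ ?_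
  · obtain ⟨hy, hy'⟩ := hderiv x (hIU hx)
    refine ((hasDerivAt_imWronskian hy hy' (heq x (hIU hx))).const_mul lam.im).hasDerivWithinAt
      |>.congr_deriv ?_
    ring
  · exact neg_nonpos.2 (mul_nonneg (sq_nonneg _) (Complex.normSq_nonneg _))

theorem eq_zero_of_mul_imWronskian_eventuallyEq_zero {x : ℝ} (hlam : lam.im ≠ 0)
    (hy : HasDerivAt y (y' x) x) (hy' : HasDerivAt y' (y'' x) x)
    (heq : -y'' x + q x * y x = lam * y x)
    (h0 : ∀ᶠ t in 𝓝 x, lam.im * imWronskian y y' t = 0) : y x = 0 := by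
  have hderiv := ((hasDerivAt_imWronskian hy hy' heq).const_mul lam.im).unique
    ((hasDerivAt_const x (0 : ℝ)).congr_of_eventuallyEq h0)
  exact Complex.normSq_eq_zero.1 (by simpa [hlam] using hderiv)

end imWronskian

theorem eigenvalues_real_general
    (q : ℝ → ℝ)
    (α β : ℝ) (a₁ a₂ a₃ a₄ b₁ b₂ b₃ b₄ : ℝ)
    (hρ12 : a₁ * b₂ - a₂ * b₁ > 0) (hρ34 : a₃ * b₄ - a₄ * b₃ > 0)
    (lam : ℂ) (y y' y'' : ℝ → ℂ) (yL yL' yR yR' : ℂ)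
    -- y is twice differentiable on [-π,0) and (0,π]
    (hy : ∀ x ∈ Set.Ico (-π) 0 ∪ Set.Ioc 0 π,
      HasDerivWithinAt y (y' x) (Set.Ico (-π) 0 ∪ Set.Ioc 0 π) x)
    (hy' : ∀ x ∈ Set.Ico (-π) 0 ∪ Set.Ioc 0 π,
      HasDerivWithinAt y' (y'' x) (Set.Ico (-π) 0 ∪ Set.Ioc 0 π) x)
    -- the differential equation on (-π,0) ∪ (0,π)
    (heq : ∀ x ∈ Set.Ioo (-π) 0 ∪ Set.Ioo 0 π,
      -y'' x + (q x : ℂ) * y x = lam * y x)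
    -- one-sided limits at 0
    (hyL : Tendsto y (𝓝[<] 0) (𝓝 yL)) (hyL' : Tendsto y' (𝓝[<] 0) (𝓝 yL'))
    (hyR : Tendsto y (𝓝[>] 0) (𝓝 yR)) (hyR' : Tendsto y' (𝓝[>] 0) (𝓝 yR'))
    -- boundary conditions
    (hb1 : (Real.cos α : ℂ) * y (-π) + (Real.sin α : ℂ) * y' (-π) = 0)
    (hb2 : (Real.cos β : ℂ) * y π + (Real.sin β : ℂ) * y' π = 0)
    -- transmission conditions
    (ht1 : (a₁ : ℂ) * yL' + (a₂ : ℂ) * yL + (a₃ : ℂ) * yR' + (a₄ : ℂ) * yR = 0)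
    (ht2 : (b₁ : ℂ) * yL' + (b₂ : ℂ) * yL + (b₃ : ℂ) * yR' + (b₄ : ℂ) * yR = 0)
    -- nontriviality
    (hnz : ∃ x ∈ Set.Ico (-π) 0 ∪ Set.Ioc 0 π, y x ≠ 0) :
    lam.im = 0 := by
  by_contra hlam
  have hUS : Ioo (-π) 0 ∪ Ioo 0 π ⊆ Ico (-π) 0 ∪ Ioc 0 π :=
    union_subset_union Ioo_subset_Ico_self Ioo_subset_Ioc_self
  have hU : IsOpen (Ioo (-π) 0 ∪ Ioo 0 π) := isOpen_Ioo.union isOpen_Ioo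
  have hderiv : ∀ x ∈ Ioo (-π) 0 ∪ Ioo 0 π, HasDerivAt y (y' x) x ∧ HasDerivAt y' (y'' x) x :=
    fun x hx ↦
      have hS := mem_of_superset (hU.mem_nhds hx) hUS
      ⟨(hy x (hUS hx)).hasDerivAt hS, (hy' x (hUS hx)).hasDerivAt hS⟩
  have hyc : ContinuousOn y (Ico (-π) 0 ∪ Ioc 0 π) := fun x hx ↦ (hy x hx).continuousWithinAt
  have hW := hyc.imWronskian fun x hx ↦ (hy' x hx).continuousWithinAt
  have hg : EqOn (fun x ↦ lam.im * imWronskian y y' x) 0 (Ico (-π) 0 ∪ Ioc 0 π) :=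
    eqOn_zero_of_antitoneOn_of_tendsto (neg_lt_zero.2 pi_pos) pi_pos hρ12 hρ34
      (antitoneOn_mul_imWronskian (convex_Ico _ _) (hW.mono subset_union_left)
        (interior_Ico.trans_subset subset_union_left) hderiv heq)
      (antitoneOn_mul_imWronskian (convex_Ioc _ _) (hW.mono subset_union_right)
        (interior_Ioc.trans_subset subset_union_right) hderiv heq)
      (by simp [imWronskian, im_mul_conj_eq_zero_of_cos_sin α hb1])
      (by simp [imWronskian, im_mul_conj_eq_zero_of_cos_sin β hb2])
      ((hyL.imWronskian hyL').const_mul _) ((hyR.imWronskian hyR').const_mul _)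
      (by linear_combination lam.im * transmission_im_mul_conj ht1 ht2)
  have hyU : EqOn y 0 (Ioo (-π) 0 ∪ Ioo 0 π) := fun x hx ↦
    eq_zero_of_mul_imWronskian_eventuallyEq_zero hlam (hderiv x hx).1 (hderiv x hx).2 (heq x hx)
      (mem_of_superset (hU.mem_nhds hx) fun t ht ↦ hg (hUS ht))
  obtain ⟨x, hx, hne⟩ := hnz
  exact hne (hyU.of_subset_closure hyc continuousOn_const hUS
    (Ico_union_Ioc_subset_closure (neg_lt_zero.2 pi_pos) pi_pos) hx)

/-- All eigenvalues of the boundary-value-transmission problem are real: if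
`λ ∈ ℂ` admits a nontrivial complex-valued eigenfunction satisfying the
equation, the boundary conditions and the transmission conditions (with
ρ₁₂ > 0, ρ₃₄ > 0), then `λ` is real. -/
theorem eigenvalues_real
    (q : ℝ → ℝ) (hq : ContinuousOn q (Set.Icc (-π) π))
    (α β : ℝ) (a₁ a₂ a₃ a₄ b₁ b₂ b₃ b₄ : ℝ)
    (hρ12 : a₁ * b₂ - a₂ * b₁ > 0) (hρ34 : a₃ * b₄ - a₄ * b₃ > 0)
    (lam : ℂ) (y y' y'' : ℝ → ℂ) (yL yL' yR yR' : ℂ)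
    -- y is twice differentiable on [-π,0) and (0,π]
    (hy : ∀ x ∈ Set.Ico (-π) 0 ∪ Set.Ioc 0 π,
      HasDerivWithinAt y (y' x) (Set.Ico (-π) 0 ∪ Set.Ioc 0 π) x)
    (hy' : ∀ x ∈ Set.Ico (-π) 0 ∪ Set.Ioc 0 π,
      HasDerivWithinAt y' (y'' x) (Set.Ico (-π) 0 ∪ Set.Ioc 0 π) x)
    -- the differential equation on (-π,0) ∪ (0,π)
    (heq : ∀ x ∈ Set.Ioo (-π) 0 ∪ Set.Ioo 0 π,
      -y'' x + (q x : ℂ) * y x = lam * y x)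
    -- one-sided limits at 0
    (hyL : Tendsto y (𝓝[<] 0) (𝓝 yL)) (hyL' : Tendsto y' (𝓝[<] 0) (𝓝 yL'))
    (hyR : Tendsto y (𝓝[>] 0) (𝓝 yR)) (hyR' : Tendsto y' (𝓝[>] 0) (𝓝 yR'))
    -- boundary conditions
    (hb1 : (Real.cos α : ℂ) * y (-π) + (Real.sin α : ℂ) * y' (-π) = 0)
    (hb2 : (Real.cos β : ℂ) * y π + (Real.sin β : ℂ) * y' π = 0)
    -- transmission conditions
    (ht1 : (a₁ : ℂ) * yL' + (a₂ : ℂ) * yL + (a₃ : ℂ) * yR' + (a₄ : ℂ) * yR = 0)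
    (ht2 : (b₁ : ℂ) * yL' + (b₂ : ℂ) * yL + (b₃ : ℂ) * yR' + (b₄ : ℂ) * yR = 0)
    -- nontriviality
    (hnz : ∃ x ∈ Set.Ico (-π) 0 ∪ Set.Ioc 0 π, y x ≠ 0) :
    lam.im = 0 :=
  eigenvalues_real_general q α β a₁ a₂ a₃ a₄ b₁ b₂ b₃ b₄ hρ12 hρ34 lam y y' y'' yL yL' yR yR' hy hy'
    heq hyL hyL' hyR hyR' hb1 hb2 ht1 ht2 hnz
end

section
/- With φ₁, φ₂, χ₁, χ₂ defined as the fundamental solutions with the initial and matching conditions of the problem, the Wronskians satisfy ρ₃₄·(φ₁(0)·χ₁'(0) - χ₁(0)·φ₁'(0)) = ρ₁₂·(φ₂(0)·χ₂'(0) - χ₂(0)·φ₂'(0)), i.e. ρ₃₄·w₁(λ) = ρ₁₂·w₂(λ). -/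
open Real Set

/-!
Clearing the denominators `ρ₃₄` and `ρ₁₂` in the matching conditions at `0`, both
`ρ₃₄·w₁` and `ρ₁₂·w₂` become the same bilinear form in the Cauchy data `(φ₁, φ₁')(0)` and
`(χ₂, χ₂')(0)`, with coefficient matrix `[[ρ₁₃, ρ₂₃], [ρ₁₄, ρ₂₄]]`, where `ρ_{kj} = a_k·b_j - a_j·b_k`.
-/

def transmissionForm (ρ₁₃ ρ₁₄ ρ₂₃ ρ₂₄ u u' v v' : ℝ) : ℝ :=
  ρ₁₃ * u * v + ρ₂₃ * u * v' + ρ₁₄ * u' * v + ρ₂₄ * u' * v'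

section

variable {ρ₁₂ ρ₁₃ ρ₁₄ ρ₂₃ ρ₂₄ ρ₃₄ u u' v v' : ℝ}

theorem mul_wronskian_eq_transmissionForm_left {w w' : ℝ} (hρ : ρ₃₄ ≠ 0)
    (hw : w = -(ρ₁₄ * v + ρ₂₄ * v') / ρ₃₄) (hw' : w' = (ρ₁₃ * v + ρ₂₃ * v') / ρ₃₄) :
    ρ₃₄ * (u * w' - w * u') = transmissionForm ρ₁₃ ρ₁₄ ρ₂₃ ρ₂₄ u u' v v' := by
  rw [hw, hw', transmissionForm]
  field_simp
  ring

theorem mul_wronskian_eq_transmissionForm_right {w w' : ℝ} (hρ : ρ₁₂ ≠ 0)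
    (hw : w = (ρ₂₃ * u + ρ₂₄ * u') / ρ₁₂) (hw' : w' = -(ρ₁₃ * u + ρ₁₄ * u') / ρ₁₂) :
    ρ₁₂ * (w * v' - v * w') = transmissionForm ρ₁₃ ρ₁₄ ρ₂₃ ρ₂₄ u u' v v' := by
  rw [hw, hw', transmissionForm]
  field_simp
  ring

end

theorem wronskian_transmission_identity_general
    (a₁ a₂ a₃ a₄ b₁ b₂ b₃ b₄ : ℝ)
    (hρ12 : a₁ * b₂ - a₂ * b₁ ≠ 0) (hρ34 : a₃ * b₄ - a₄ * b₃ ≠ 0)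
    (φ₁ φ₁' φ₂ φ₂' χ₁ χ₁' χ₂ χ₂' : ℝ → ℝ)
    (hmφ : φ₂ 0 = ((a₂ * b₃ - a₃ * b₂) * φ₁ 0 + (a₂ * b₄ - a₄ * b₂) * φ₁' 0)
      / (a₁ * b₂ - a₂ * b₁))
    (hmφ' : φ₂' 0 = -((a₁ * b₃ - a₃ * b₁) * φ₁ 0 + (a₁ * b₄ - a₄ * b₁) * φ₁' 0)
      / (a₁ * b₂ - a₂ * b₁))
    (hmχ : χ₁ 0 = -((a₁ * b₄ - a₄ * b₁) * χ₂ 0 + (a₂ * b₄ - a₄ * b₂) * χ₂' 0)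
      / (a₃ * b₄ - a₄ * b₃))
    (hmχ' : χ₁' 0 = ((a₁ * b₃ - a₃ * b₁) * χ₂ 0 + (a₂ * b₃ - a₃ * b₂) * χ₂' 0)
      / (a₃ * b₄ - a₄ * b₃)) :
    (a₃ * b₄ - a₄ * b₃) * (φ₁ 0 * χ₁' 0 - χ₁ 0 * φ₁' 0)
      = (a₁ * b₂ - a₂ * b₁) * (φ₂ 0 * χ₂' 0 - χ₂ 0 * φ₂' 0) :=
  (mul_wronskian_eq_transmissionForm_left hρ34 hmχ hmχ').trans
    (mul_wronskian_eq_transmissionForm_right hρ12 hmφ hmφ').symm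

/-- The Wronskians of the fundamental solutions at `0` satisfy
`ρ₃₄·w₁(λ) = ρ₁₂·w₂(λ)`, where `w₁(λ) = φ₁(0)χ₁'(0) - χ₁(0)φ₁'(0)` and
`w₂(λ) = φ₂(0)χ₂'(0) - χ₂(0)φ₂'(0)`, the minors being
`ρ_{kj} = a_k·b_j - a_j·b_k`. -/
theorem wronskian_transmission_identity
    (q : ℝ → ℝ) (lam α β : ℝ) (a₁ a₂ a₃ a₄ b₁ b₂ b₃ b₄ : ℝ)
    (hρ12 : a₁ * b₂ - a₂ * b₁ ≠ 0) (hρ34 : a₃ * b₄ - a₄ * b₃ ≠ 0)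
    (φ₁ φ₁' φ₁'' φ₂ φ₂' φ₂'' χ₁ χ₁' χ₁'' χ₂ χ₂' χ₂'' : ℝ → ℝ)
    (hdφ1 : ∀ x ∈ Set.Icc (-π) 0, HasDerivWithinAt φ₁ (φ₁' x) (Set.Icc (-π) 0) x)
    (hdφ1' : ∀ x ∈ Set.Icc (-π) 0, HasDerivWithinAt φ₁' (φ₁'' x) (Set.Icc (-π) 0) x)
    (heqφ1 : ∀ x ∈ Set.Icc (-π) 0, -φ₁'' x + q x * φ₁ x = lam * φ₁ x)
    (hiφ : φ₁ (-π) = Real.sin α) (hiφ' : φ₁' (-π) = -Real.cos α)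
    (hdφ2 : ∀ x ∈ Set.Icc 0 π, HasDerivWithinAt φ₂ (φ₂' x) (Set.Icc 0 π) x)
    (hdφ2' : ∀ x ∈ Set.Icc 0 π, HasDerivWithinAt φ₂' (φ₂'' x) (Set.Icc 0 π) x)
    (heqφ2 : ∀ x ∈ Set.Icc 0 π, -φ₂'' x + q x * φ₂ x = lam * φ₂ x)
    (hmφ : φ₂ 0 = ((a₂ * b₃ - a₃ * b₂) * φ₁ 0 + (a₂ * b₄ - a₄ * b₂) * φ₁' 0)
      / (a₁ * b₂ - a₂ * b₁))
    (hmφ' : φ₂' 0 = -((a₁ * b₃ - a₃ * b₁) * φ₁ 0 + (a₁ * b₄ - a₄ * b₁) * φ₁' 0)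
      / (a₁ * b₂ - a₂ * b₁))
    (hdχ2 : ∀ x ∈ Set.Icc 0 π, HasDerivWithinAt χ₂ (χ₂' x) (Set.Icc 0 π) x)
    (hdχ2' : ∀ x ∈ Set.Icc 0 π, HasDerivWithinAt χ₂' (χ₂'' x) (Set.Icc 0 π) x)
    (heqχ2 : ∀ x ∈ Set.Icc 0 π, -χ₂'' x + q x * χ₂ x = lam * χ₂ x)
    (hiχ : χ₂ π = -Real.sin β) (hiχ' : χ₂' π = Real.cos β)
    (hdχ1 : ∀ x ∈ Set.Icc (-π) 0, HasDerivWithinAt χ₁ (χ₁' x) (Set.Icc (-π) 0) x)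
    (hdχ1' : ∀ x ∈ Set.Icc (-π) 0, HasDerivWithinAt χ₁' (χ₁'' x) (Set.Icc (-π) 0) x)
    (heqχ1 : ∀ x ∈ Set.Icc (-π) 0, -χ₁'' x + q x * χ₁ x = lam * χ₁ x)
    (hmχ : χ₁ 0 = -((a₁ * b₄ - a₄ * b₁) * χ₂ 0 + (a₂ * b₄ - a₄ * b₂) * χ₂' 0)
      / (a₃ * b₄ - a₄ * b₃))
    (hmχ' : χ₁' 0 = ((a₁ * b₃ - a₃ * b₁) * χ₂ 0 + (a₂ * b₃ - a₃ * b₂) * χ₂' 0)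
      / (a₃ * b₄ - a₄ * b₃)) :
    (a₃ * b₄ - a₄ * b₃) * (φ₁ 0 * χ₁' 0 - χ₁ 0 * φ₁' 0)
      = (a₁ * b₂ - a₂ * b₁) * (φ₂ 0 * χ₂' 0 - χ₂ 0 * φ₂' 0) :=
  wronskian_transmission_identity_general a₁ a₂ a₃ a₄ b₁ b₂ b₃ b₄ hρ12 hρ34 φ₁ φ₁' φ₂ φ₂' χ₁ χ₁' χ₂
    χ₂' hmφ hmφ' hmχ hmχ'
end

section
/- Suppose sin α = 0 (so cos α ≠ 0). With φ₁ as above, there exist constants C, R > 0 such that for all s with |s| ≥ R and all x ∈ [-π,0]: |φ₁(x,λ) + (cos α/s)·sin(s(x+π))| ≤ C·|s|⁻²·e^{|t|(x+π)}. -/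
/-!
Variation of constants turns the equation into the Volterra equation
`s φ(x) = -cos α · sin (s (x + π)) + ∫_{-π}^x q(τ) φ(τ) sin (s (x - τ)) dτ`.
Since `|sin (s r)| ≤ e^{|t| r}` for `r ≥ 0`, the maximum `M` of `|φ(x)| e^{-|t| (x + π)}` satisfies
`|s| M ≤ |cos α| + π ‖q‖_∞ M`, so `M ≤ 2 |cos α| / |s|` once `|s| ≥ 2 π ‖q‖_∞`. Feeding this back
into the integral term shows it is `O(|s|⁻¹ e^{|t| (x + π)})`, and dividing by `s` gives the claim.
-/

open Real Set

theorem Complex.norm_sin_le_exp_abs_im (z : ℂ) : ‖Complex.sin z‖ ≤ Real.exp |z.im| := by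
  have h₁ : ‖Complex.exp (-z * I)‖ = Real.exp z.im := by simp [Complex.norm_exp]
  have h₂ : ‖Complex.exp (z * I)‖ = Real.exp (-z.im) := by simp [Complex.norm_exp]
  calc ‖Complex.sin z‖ = ‖Complex.exp (-z * I) - Complex.exp (z * I)‖ / 2 := by
        rw [Complex.sin, norm_div, norm_mul]; simp
    _ ≤ (Real.exp z.im + Real.exp (-z.im)) / 2 := by
        gcongr; exact (norm_sub_le _ _).trans_eq (by rw [h₁, h₂])
    _ ≤ Real.exp |z.im| := by
        have := Real.exp_le_exp.2 (le_abs_self z.im)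
        have := Real.exp_le_exp.2 (neg_le_abs z.im)
        linarith

theorem Complex.norm_sin_mul_ofReal_le (s : ℂ) {r : ℝ} (hr : 0 ≤ r) :
    ‖Complex.sin (s * r)‖ ≤ Real.exp (|s.im| * r) := by
  simpa [abs_mul, abs_of_nonneg hr] using Complex.norm_sin_le_exp_abs_im (s * r)

variable {a b : ℝ} {s : ℂ} {f f' f'' g k : ℝ → ℂ}

theorem variation_of_constants_sin (hab : a ≤ b)
    (hf : ∀ x ∈ Icc a b, HasDerivWithinAt f (f' x) (Icc a b) x)
    (hf' : ∀ x ∈ Icc a b, HasDerivWithinAt f' (f'' x) (Icc a b) x)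
    (heq : ∀ x ∈ Icc a b, f'' x + s ^ 2 * f x = g x)
    (hg : IntervalIntegrable g MeasureTheory.volume a b) :
    s * f b = f' a * Complex.sin (s * (b - a)) + s * f a * Complex.cos (s * (b - a))
      + ∫ τ in a..b, g τ * Complex.sin (s * (b - τ)) := by
  set W : ℝ → ℂ := fun τ ↦
    f' τ * Complex.sin (s * (b - τ)) + s * f τ * Complex.cos (s * (b - τ)) with hW
  have hlin : ∀ τ : ℝ, HasDerivAt (fun τ : ℝ ↦ s * ((b : ℂ) - τ)) (-s) τ := fun τ ↦ by
    simpa using (((hasDerivAt_id (τ : ℂ)).const_sub (b : ℂ)).const_mul s).comp_ofReal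
  have hWd : ∀ τ ∈ Icc a b,
      HasDerivWithinAt W (g τ * Complex.sin (s * (b - τ))) (Icc a b) τ := fun τ hτ ↦ by
    have hsin := ((Complex.hasDerivAt_sin _).comp τ (hlin τ)).hasDerivWithinAt (s := Icc a b)
    have hcos := ((Complex.hasDerivAt_cos _).comp τ (hlin τ)).hasDerivWithinAt (s := Icc a b)
    have := ((hf' τ hτ).mul hsin).add (((hf τ hτ).const_mul s).mul hcos)
    exact this.congr_deriv (by simp only [Function.comp_apply]; rw [← heq τ hτ]; ring)
  have hFTC := intervalIntegral.integral_eq_sub_of_hasDeriv_right_of_le hab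
    (fun τ hτ ↦ (hWd τ hτ).continuousWithinAt)
    (fun τ hτ ↦ (hWd τ (Ioo_subset_Icc_self hτ)).mono_of_mem_nhdsWithin
      (Icc_mem_nhdsGT_of_mem (Ioo_subset_Ico_self hτ)))
    (hg.mul_continuousOn (by fun_prop))
  rw [hFTC]
  simp [hW]

theorem norm_integral_mul_sin_le {y B : ℝ} (hay : a ≤ y)
    (hg : ∀ τ ∈ Icc a y, ‖g τ‖ ≤ B * Real.exp (|s.im| * (τ - a))) :
    ‖∫ τ in a..y, g τ * Complex.sin (s * (y - τ))‖
      ≤ B * (y - a) * Real.exp (|s.im| * (y - a)) := by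
  have hbound : ∀ τ ∈ uIoc a y,
      ‖g τ * Complex.sin (s * (y - τ))‖ ≤ B * Real.exp (|s.im| * (y - a)) := by
    intro τ hτ
    rw [uIoc_of_le hay] at hτ
    have hsin := Complex.norm_sin_mul_ofReal_le s (sub_nonneg.2 hτ.2)
    push_cast at hsin
    calc ‖g τ * Complex.sin (s * (y - τ))‖
        ≤ B * Real.exp (|s.im| * (τ - a)) * Real.exp (|s.im| * (y - τ)) := by
          rw [norm_mul]
          exact mul_le_mul (hg τ (Ioc_subset_Icc_self hτ)) hsin (norm_nonneg _)
            ((norm_nonneg _).trans (hg τ (Ioc_subset_Icc_self hτ)))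
      _ = B * Real.exp (|s.im| * (y - a)) := by rw [mul_assoc, ← Real.exp_add]; ring_nf
  calc _ ≤ B * Real.exp (|s.im| * (y - a)) * |y - a| :=
        intervalIntegral.norm_integral_le_of_norm_le_const hbound
    _ = _ := by rw [abs_of_nonneg (sub_nonneg.2 hay)]; ring

theorem exists_attained_exp_bound (hab : a ≤ b) (hf : ContinuousOn f (Icc a b)) (c : ℝ) :
    ∃ M, ∃ y₀ ∈ Icc a b, ‖f y₀‖ = M * Real.exp (c * (y₀ - a)) ∧
      ∀ y ∈ Icc a b, ‖f y‖ ≤ M * Real.exp (c * (y - a)) := by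
  have hw : ContinuousOn (fun y ↦ ‖f y‖ * Real.exp (-(c * (y - a)))) (Icc a b) :=
    hf.norm.mul (by fun_prop)
  obtain ⟨y₀, hy₀, hmax⟩ := isCompact_Icc.exists_isMaxOn (nonempty_Icc.2 hab) hw
  refine ⟨‖f y₀‖ * Real.exp (-(c * (y₀ - a))), y₀, hy₀, ?_, fun y hy ↦ ?_⟩
  · rw [mul_assoc, ← Real.exp_add, neg_add_cancel, Real.exp_zero, mul_one]
  · have := mul_le_mul_of_nonneg_right (hmax hy) (Real.exp_pos (c * (y - a))).le
    rwa [mul_assoc, ← Real.exp_add, neg_add_cancel, Real.exp_zero, mul_one] at this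

theorem mul_norm_le_of_volterra {K : ℝ} {c₀ : ℂ} (hab : a ≤ b) (hf : ContinuousOn f (Icc a b))
    (hk : ∀ τ ∈ Icc a b, ‖k τ‖ ≤ K) (hs : 2 * K * (b - a) ≤ ‖s‖)
    (hV : ∀ y ∈ Icc a b, s * f y = c₀ * Complex.sin (s * (y - a))
      + ∫ τ in a..y, k τ * f τ * Complex.sin (s * (y - τ))) :
    ∀ y ∈ Icc a b, ‖s‖ * ‖f y‖ ≤ 2 * ‖c₀‖ * Real.exp (|s.im| * (y - a)) := by
  obtain ⟨M, y₀, hy₀, hMy₀, hM⟩ := exists_attained_exp_bound hab hf |s.im|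
  have hM0 : 0 ≤ M := nonneg_of_mul_nonneg_left (hMy₀ ▸ norm_nonneg _) (Real.exp_pos _)
  have hK0 : 0 ≤ K := (norm_nonneg _).trans (hk a (left_mem_Icc.2 hab))
  have hvol : ∀ y ∈ Icc a b,
      ‖s‖ * ‖f y‖ ≤ (‖c₀‖ + K * M * (b - a)) * Real.exp (|s.im| * (y - a)) := fun y hy ↦ by
    have hsin := Complex.norm_sin_mul_ofReal_le s (sub_nonneg.2 hy.1)
    push_cast at hsin
    have hint := norm_integral_mul_sin_le (g := fun τ ↦ k τ * f τ) (B := K * M) (s := s)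
      hy.1 fun τ hτ ↦ by
        rw [norm_mul, mul_assoc]
        exact mul_le_mul (hk τ ⟨hτ.1, hτ.2.trans hy.2⟩) (hM τ ⟨hτ.1, hτ.2.trans hy.2⟩)
          (norm_nonneg _) hK0
    have hya : y - a ≤ b - a := by linarith [hy.2]
    calc ‖s‖ * ‖f y‖ ≤ ‖c₀‖ * Real.exp (|s.im| * (y - a))
          + K * M * (y - a) * Real.exp (|s.im| * (y - a)) := by
          rw [← norm_mul, hV y hy]
          exact (norm_add_le _ _).trans (add_le_add (by rw [norm_mul]; gcongr) hint)
      _ ≤ _ := by rw [add_mul]; gcongr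
  have hsM : ‖s‖ * M ≤ ‖c₀‖ + K * M * (b - a) := by
    have := hvol y₀ hy₀
    rw [hMy₀, ← mul_assoc] at this
    exact le_of_mul_le_mul_right this (Real.exp_pos _)
  have hsM' : ‖s‖ * M ≤ 2 * ‖c₀‖ := by nlinarith [mul_le_mul_of_nonneg_right hs hM0]
  intro y hy
  calc ‖s‖ * ‖f y‖ ≤ ‖s‖ * (M * Real.exp (|s.im| * (y - a))) := by gcongr; exact hM y hy
    _ ≤ 2 * ‖c₀‖ * Real.exp (|s.im| * (y - a)) := by rw [← mul_assoc]; gcongr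

theorem norm_sub_div_mul_sin_le_of_volterra {K : ℝ} {c₀ : ℂ} (hab : a ≤ b)
    (hf : ContinuousOn f (Icc a b)) (hk : ∀ τ ∈ Icc a b, ‖k τ‖ ≤ K)
    (hs : 2 * K * (b - a) ≤ ‖s‖) (hs0 : s ≠ 0)
    (hV : ∀ y ∈ Icc a b, s * f y = c₀ * Complex.sin (s * (y - a))
      + ∫ τ in a..y, k τ * f τ * Complex.sin (s * (y - τ))) :
    ∀ x ∈ Icc a b, ‖f x - c₀ / s * Complex.sin (s * (x - a))‖
      ≤ 2 * ‖c₀‖ * K * (b - a) * ‖s‖⁻¹ ^ 2 * Real.exp (|s.im| * (x - a)) := by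
  intro x hx
  have hs' : 0 < ‖s‖ := norm_pos_iff.2 hs0
  have hK0 : 0 ≤ K := (norm_nonneg _).trans (hk a (left_mem_Icc.2 hab))
  have hf_le : ∀ y ∈ Icc a b, ‖f y‖ ≤ 2 * ‖c₀‖ * ‖s‖⁻¹ * Real.exp (|s.im| * (y - a)) := by
    intro y hy
    rw [mul_right_comm, ← div_eq_mul_inv, le_div_iff₀ hs', mul_comm]
    exact mul_norm_le_of_volterra hab hf hk hs hV y hy
  have hint := norm_integral_mul_sin_le (g := fun τ ↦ k τ * f τ)
    (B := K * (2 * ‖c₀‖ * ‖s‖⁻¹)) (s := s) hx.1 fun τ hτ ↦ by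
      rw [norm_mul, mul_assoc]
      exact mul_le_mul (hk τ ⟨hτ.1, hτ.2.trans hx.2⟩) (hf_le τ ⟨hτ.1, hτ.2.trans hx.2⟩)
        (norm_nonneg _) hK0
  have hrw : f x - c₀ / s * Complex.sin (s * (x - a))
      = (∫ τ in a..x, k τ * f τ * Complex.sin (s * (x - τ))) / s := by
    field_simp
    linear_combination hV x hx
  rw [hrw, norm_div, div_eq_mul_inv]
  calc _ ≤ K * (2 * ‖c₀‖ * ‖s‖⁻¹) * (x - a) * Real.exp (|s.im| * (x - a)) * ‖s‖⁻¹ := by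
        gcongr
    _ ≤ K * (2 * ‖c₀‖ * ‖s‖⁻¹) * (b - a) * Real.exp (|s.im| * (x - a)) * ‖s‖⁻¹ := by
        gcongr; linarith [hx.2]
    _ = _ := by ring

theorem phi1_asymptotics_sin_eq_zero_general
    (q : ℝ → ℝ) (hq : ContinuousOn q (Set.Icc (-π) 0))
    (α : ℝ)
    (φ φ' φ'' : ℂ → ℝ → ℂ)
    (hd : ∀ s : ℂ, ∀ x ∈ Set.Icc (-π) 0,
      HasDerivWithinAt (φ s) (φ' s x) (Set.Icc (-π) 0) x)
    (hd' : ∀ s : ℂ, ∀ x ∈ Set.Icc (-π) 0,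
      HasDerivWithinAt (φ' s) (φ'' s x) (Set.Icc (-π) 0) x)
    (heq : ∀ s : ℂ, ∀ x ∈ Set.Icc (-π) 0,
      -φ'' s x + (q x : ℂ) * φ s x = s ^ 2 * φ s x)
    (hi : ∀ s : ℂ, φ s (-π) = 0)
    (hi' : ∀ s : ℂ, φ' s (-π) = -(Real.cos α : ℂ)) :
    ∃ C > 0, ∃ R > 0, ∀ s : ℂ, R ≤ ‖s‖ → ∀ x ∈ Set.Icc (-π) 0,
      ‖φ s x + ((Real.cos α : ℂ) / s) * Complex.sin (s * (x + π))‖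
        ≤ C * ‖s‖⁻¹ ^ 2 * Real.exp (|s.im| * (x + π)) := by
  have hπ : -π ≤ 0 := by linarith [Real.pi_pos]
  have hqc : ContinuousOn (fun x ↦ (q x : ℂ)) (Icc (-π) 0) :=
    Complex.continuous_ofReal.comp_continuousOn hq
  obtain ⟨K, hK⟩ := isCompact_Icc.exists_bound_of_continuousOn hqc
  have hK0 : 0 ≤ K := (norm_nonneg _).trans (hK _ (left_mem_Icc.2 hπ))
  refine ⟨2 * |Real.cos α| * K * π + 1, by positivity, 2 * K * π + 1, by positivity,
    fun s hs x hx ↦ ?_⟩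
  have hs0 : s ≠ 0 := norm_pos_iff.1 (lt_of_lt_of_le (by positivity) hs)
  have hV : ∀ y ∈ Icc (-π) 0,
      s * φ s y = -(Real.cos α : ℂ) * Complex.sin (s * (y - (-π : ℝ)))
        + ∫ τ in (-π)..y, (q τ : ℂ) * φ s τ * Complex.sin (s * (y - τ)) := fun y hy ↦ by
    have hsub : Icc (-π) y ⊆ Icc (-π) 0 := Icc_subset_Icc_right hy.2
    have := variation_of_constants_sin (g := fun τ ↦ (q τ : ℂ) * φ s τ) hy.1
      (fun τ hτ ↦ (hd s τ (hsub hτ)).mono hsub) (fun τ hτ ↦ (hd' s τ (hsub hτ)).mono hsub)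
      (fun τ hτ ↦ by linear_combination -heq s τ (hsub hτ))
      ((hqc.mul fun τ hτ ↦ (hd s τ hτ).continuousWithinAt).mono hsub
        |>.intervalIntegrable_of_Icc hy.1)
    simpa [hi, hi'] using this
  have key := norm_sub_div_mul_sin_le_of_volterra hπ
    (fun τ hτ ↦ (hd s τ hτ).continuousWithinAt) hK (by linarith) hs0 hV x hx
  simp only [neg_div, neg_mul, sub_neg_eq_add, norm_neg, Complex.norm_real, Real.norm_eq_abs,
    Complex.ofReal_neg, zero_add] at key
  exact key.trans (by gcongr; linarith)

/-- Asymptotics of `φ₁` when `sin α = 0` (so `cos α ≠ 0`): for `λ = s²`,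
`t = Im s`, `φ₁(x,λ) = -(cos α/s)·sin(s(x+π)) + O(|s|⁻² e^{|t|(x+π)})`
uniformly in `x ∈ [-π,0]` as `|s| → ∞`. -/
theorem phi1_asymptotics_sin_eq_zero
    (q : ℝ → ℝ) (hq : ContinuousOn q (Set.Icc (-π) 0))
    (α : ℝ) (hα : Real.sin α = 0)
    (φ φ' φ'' : ℂ → ℝ → ℂ)
    (hd : ∀ s : ℂ, ∀ x ∈ Set.Icc (-π) 0,
      HasDerivWithinAt (φ s) (φ' s x) (Set.Icc (-π) 0) x)
    (hd' : ∀ s : ℂ, ∀ x ∈ Set.Icc (-π) 0,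
      HasDerivWithinAt (φ' s) (φ'' s x) (Set.Icc (-π) 0) x)
    (heq : ∀ s : ℂ, ∀ x ∈ Set.Icc (-π) 0,
      -φ'' s x + (q x : ℂ) * φ s x = s ^ 2 * φ s x)
    (hi : ∀ s : ℂ, φ s (-π) = 0)
    (hi' : ∀ s : ℂ, φ' s (-π) = -(Real.cos α : ℂ)) :
    ∃ C > 0, ∃ R > 0, ∀ s : ℂ, R ≤ ‖s‖ → ∀ x ∈ Set.Icc (-π) 0,
      ‖φ s x + ((Real.cos α : ℂ) / s) * Complex.sin (s * (x + π))‖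
        ≤ C * ‖s‖⁻¹ ^ 2 * Real.exp (|s.im| * (x + π)) :=
  phi1_asymptotics_sin_eq_zero_general q hq α φ φ' φ'' hd hd' heq hi hi'
end

section
/- Suppose sin α = 0 and sin β = 0 (so cos α, cos β ≠ 0) and ρ₂₄ ≠ 0. With w(λ) = ρ₁₂·(cos β·φ₂(π,λ) + sin β·φ₂'(π,λ)) = ρ₁₂·cos β·φ₂(π,λ), there exist C, R > 0 such that for all s with |s| ≥ R, λ = s², t = Im s: |w(λ) + ρ₂₄·cos α·cos β·cos²(sπ)| ≤ C·|s|⁻¹·e^{2π|t|}. -/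
/-! Variation of constants writes a solution of `-y'' + q y = s² y` on `[a, b]` as the free
solution `y(a) cos(s(x-a)) + y'(a) sin(s(x-a))/s` plus the integral of `q y` against
`sin(s(x-ξ))/s`. At a maximiser of `‖y x‖ e^{-|Im s|(x-a)}` that integral is at most half of the
left-hand side once `|s| ≥ 2 sup|q| (b-a)`, so `y` grows at most like `e^{|Im s|(x-a)}` and the
integral is a relative `O(1/|s|)` correction.

On `[-π, 0]` this gives `φ₁(0) = O(e^{π|t|}/|s|)` and `φ₁'(0) = -cos α cos(sπ) + O(e^{π|t|}/|s|)`.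
The matching conditions turn this into `φ₂(0) = -(ρ₂₄/ρ₁₂) cos α cos(sπ) + O(e^{π|t|}/|s|)` and
`φ₂'(0) = O(e^{π|t|})`, and propagating across `[0, π]` gives
`φ₂(π) = -(ρ₂₄/ρ₁₂) cos α cos²(sπ) + O(e^{2π|t|}/|s|)`. As `sin β = 0`, multiplying by
`ρ₁₂ cos β` gives the estimate. -/

open Real Set Filter Asymptotics Bornology

namespace Complex

lemma norm_exp_mul_I_le (z : ℂ) : ‖Complex.exp (z * Complex.I)‖ ≤ rexp |z.im| := by
  rw [Complex.norm_exp]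
  simpa using neg_le_abs z.im

lemma norm_cos_le_exp_abs_im (z : ℂ) : ‖Complex.cos z‖ ≤ rexp |z.im| := by
  have h₁ := norm_exp_mul_I_le z
  have h₂ := norm_exp_mul_I_le (-z)
  rw [Complex.neg_im, abs_neg] at h₂
  rw [Complex.cos, norm_div, Complex.norm_ofNat]
  linarith [norm_add_le (Complex.exp (z * Complex.I)) (Complex.exp (-z * Complex.I))]

lemma norm_sin_le_exp_abs_im_s16 (z : ℂ) : ‖Complex.sin z‖ ≤ rexp |z.im| := by
  have h₁ := norm_exp_mul_I_le z
  have h₂ := norm_exp_mul_I_le (-z)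
  rw [Complex.neg_im, abs_neg] at h₂
  rw [Complex.sin, norm_div, norm_mul, Complex.norm_I, mul_one, Complex.norm_ofNat]
  linarith [norm_sub_le (Complex.exp (-z * Complex.I)) (Complex.exp (z * Complex.I))]

lemma abs_im_mul_ofReal (s : ℂ) {ℓ : ℝ} (hℓ : 0 ≤ ℓ) : |(s * ℓ).im| = |s.im| * ℓ := by
  rw [Complex.im_mul_ofReal, abs_mul, abs_of_nonneg hℓ]

lemma norm_cos_mul_ofReal_le (s : ℂ) {ℓ : ℝ} (hℓ : 0 ≤ ℓ) :
    ‖Complex.cos (s * ℓ)‖ ≤ rexp (|s.im| * ℓ) :=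
  abs_im_mul_ofReal s hℓ ▸ norm_cos_le_exp_abs_im _

lemma norm_sin_mul_ofReal_le_s16 (s : ℂ) {ℓ : ℝ} (hℓ : 0 ≤ ℓ) :
    ‖Complex.sin (s * ℓ)‖ ≤ rexp (|s.im| * ℓ) :=
  abs_im_mul_ofReal s hℓ ▸ norm_sin_le_exp_abs_im_s16 _

lemma hasDerivAt_cos_mul_sub (s : ℂ) (x ξ : ℝ) :
    HasDerivAt (fun u : ℝ => Complex.cos (s * ↑(x - u))) (s * Complex.sin (s * ↑(x - ξ))) ξ := by
  have := (Complex.hasDerivAt_cos _).comp ξ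
    (((hasDerivAt_id ξ).const_sub x).ofReal_comp.const_mul s)
  simpa [mul_comm, Function.comp_def] using this

lemma hasDerivAt_sin_mul_sub (s : ℂ) (x ξ : ℝ) :
    HasDerivAt (fun u : ℝ => Complex.sin (s * ↑(x - u))) (-(s * Complex.cos (s * ↑(x - ξ)))) ξ := by
  have := (Complex.hasDerivAt_sin _).comp ξ
    (((hasDerivAt_id ξ).const_sub x).ofReal_comp.const_mul s)
  simpa [mul_comm, Function.comp_def] using this

end Complex

theorem intervalIntegral.integral_eq_sub_of_hasDerivWithinAt_Icc {E : Type*}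
    [NormedAddCommGroup E] [NormedSpace ℝ E] [CompleteSpace E] {a b : ℝ} {G g : ℝ → E}
    (hab : a ≤ b)
    (hG : ∀ x ∈ Icc a b, HasDerivWithinAt G (g x) (Icc a b) x) (hg : ContinuousOn g (Icc a b)) :
    ∫ x in a..b, g x = G b - G a :=
  intervalIntegral.integral_eq_sub_of_hasDeriv_right_of_le hab
    (fun x hx => (hG x hx).continuousWithinAt)
    (fun x hx => (hG x (Ioo_subset_Icc_self hx)).mono_of_mem_nhdsWithin
      (Icc_mem_nhdsGT_of_mem ⟨hx.1.le, hx.2⟩))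
    (hg.intervalIntegrable_of_Icc hab)

namespace Asymptotics

lemma exists_pos_bound_of_isBigO_cobounded {E F G : Type*} [SeminormedAddCommGroup E] [Norm F]
    [SeminormedAddCommGroup G] {f : E → F} {g : E → G} (h : f =O[cobounded E] g) :
    ∃ C > 0, ∃ R > 0, ∀ x, R ≤ ‖x‖ → ‖f x‖ ≤ C * ‖g x‖ := by
  obtain ⟨C, hC, hCg⟩ := h.exists_pos
  obtain ⟨R, -, hR⟩ := hasBasis_cobounded_norm.eventually_iff.1 hCg.bound
  exact ⟨C, hC, max R 1, by positivity, fun x hx => hR (le_of_max_le_left hx)⟩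

lemma isBigO_inv_norm_one : (fun s : ℂ => ‖s‖⁻¹) =O[cobounded ℂ] fun _ => (1 : ℝ) :=
  IsBigO.of_bound 1 <| (eventually_cobounded_le_norm 1).mono fun s hs => by
    rw [norm_inv, norm_norm, norm_one, one_mul]
    exact inv_le_one_of_one_le₀ hs

lemma isBigO_inv_norm : (fun s : ℂ => s⁻¹) =O[cobounded ℂ] fun s => ‖s‖⁻¹ :=
  (isBigO_refl _ _).norm_right.congr_right fun s => norm_inv s

variable {g : ℂ → ℝ}

lemma IsBigO.of_inv_norm_mul {f : ℂ → ℂ} (h : f =O[cobounded ℂ] fun s => ‖s‖⁻¹ * g s) :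
    f =O[cobounded ℂ] g :=
  (h.trans (isBigO_inv_norm_one.mul (isBigO_refl g _))).congr_right fun _ => one_mul _

lemma IsBigO.of_sub_inv_norm_mul {f c : ℂ → ℂ}
    (hf : (fun s => f s - c s) =O[cobounded ℂ] fun s => ‖s‖⁻¹ * g s)
    (hc : c =O[cobounded ℂ] g) : f =O[cobounded ℂ] g :=
  (hf.of_inv_norm_mul.add hc).congr_left fun _ => sub_add_cancel _ _

lemma isBigO_cos_mul_ofReal {ℓ : ℝ} (hℓ : 0 ≤ ℓ) (l : Filter ℂ) :
    (fun s : ℂ => Complex.cos (s * ℓ)) =O[l] fun s => rexp (|s.im| * ℓ) :=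
  IsBigO.of_bound 1 <| Eventually.of_forall fun s => by
    rw [one_mul, Real.norm_of_nonneg (Real.exp_pos _).le]
    exact Complex.norm_cos_mul_ofReal_le s hℓ

lemma isBigO_sin_mul_ofReal {ℓ : ℝ} (hℓ : 0 ≤ ℓ) (l : Filter ℂ) :
    (fun s : ℂ => Complex.sin (s * ℓ)) =O[l] fun s => rexp (|s.im| * ℓ) :=
  IsBigO.of_bound 1 <| Eventually.of_forall fun s => by
    rw [one_mul, Real.norm_of_nonneg (Real.exp_pos _).le]
    exact Complex.norm_sin_mul_ofReal_le_s16 s hℓ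

end Asymptotics

namespace SturmLiouville

lemma norm_integral_le_of_kernel {q : ℝ → ℝ} {k y : ℝ → ℂ} {a x t Q M : ℝ} (hax : a ≤ x)
    (hk : ∀ ξ ∈ Icc a x, ‖k ξ‖ ≤ rexp (t * (x - ξ))) (hq : ∀ ξ ∈ Icc a x, ‖q ξ‖ ≤ Q)
    (hy : ∀ ξ ∈ Icc a x, ‖y ξ‖ ≤ M * rexp (t * (ξ - a))) :
    ‖∫ ξ in a..x, k ξ * q ξ * y ξ‖ ≤ Q * M * rexp (t * (x - a)) * (x - a) := by
  have hQ : 0 ≤ Q := (norm_nonneg _).trans (hq a (left_mem_Icc.2 hax))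
  have := intervalIntegral.norm_integral_le_of_norm_le_const
    (f := fun ξ => k ξ * q ξ * y ξ) (C := Q * M * rexp (t * (x - a))) fun ξ hξ => by
      rw [uIoc_of_le hax] at hξ
      have hξ' : ξ ∈ Icc a x := Ioc_subset_Icc_self hξ
      rw [norm_mul, norm_mul, Complex.norm_real]
      calc ‖k ξ‖ * ‖q ξ‖ * ‖y ξ‖ ≤ rexp (t * (x - ξ)) * Q * (M * rexp (t * (ξ - a))) := by
            gcongr
            exacts [hk ξ hξ', hq ξ hξ', hy ξ hξ']
        _ = Q * M * rexp (t * (x - a)) := by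
            rw [show t * (x - a) = t * (x - ξ) + t * (ξ - a) by ring, Real.exp_add]; ring
  rwa [abs_of_nonneg (sub_nonneg.2 hax)] at this

structure IsSolutionOn (q : ℝ → ℝ) (s : ℂ) (a b : ℝ) (y y' y'' : ℝ → ℂ) : Prop where
  hasDerivWithinAt : ∀ x ∈ Icc a b, HasDerivWithinAt y (y' x) (Icc a b) x
  hasDerivWithinAt_deriv : ∀ x ∈ Icc a b, HasDerivWithinAt y' (y'' x) (Icc a b) x
  eq : ∀ x ∈ Icc a b, -y'' x + q x * y x = s ^ 2 * y x

namespace IsSolutionOn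

variable {q : ℝ → ℝ} {s : ℂ} {a b : ℝ} {y y' y'' : ℝ → ℂ}

lemma mono (h : IsSolutionOn q s a b y y' y'') {x : ℝ} (hx : x ∈ Icc a b) :
    IsSolutionOn q s a x y y' y'' where
  hasDerivWithinAt ξ hξ :=
    (h.hasDerivWithinAt ξ (Icc_subset_Icc_right hx.2 hξ)).mono (Icc_subset_Icc_right hx.2)
  hasDerivWithinAt_deriv ξ hξ :=
    (h.hasDerivWithinAt_deriv ξ (Icc_subset_Icc_right hx.2 hξ)).mono (Icc_subset_Icc_right hx.2)
  eq ξ hξ := h.eq ξ (Icc_subset_Icc_right hx.2 hξ)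

lemma continuousOn (h : IsSolutionOn q s a b y y' y'') : ContinuousOn y (Icc a b) :=
  fun x hx => (h.hasDerivWithinAt x hx).continuousWithinAt

lemma mul_eq_add_integral (h : IsSolutionOn q s a b y y' y'') (hq : ContinuousOn q (Icc a b))
    (hab : a ≤ b) :
    s * y b = s * y a * Complex.cos (s * ↑(b - a)) + y' a * Complex.sin (s * ↑(b - a))
      + ∫ ξ in a..b, Complex.sin (s * ↑(b - ξ)) * q ξ * y ξ := by
  have hG : ∀ ξ ∈ Icc a b, HasDerivWithinAt
      (fun ξ => s * y ξ * Complex.cos (s * ↑(b - ξ)) + y' ξ * Complex.sin (s * ↑(b - ξ)))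
      (Complex.sin (s * ↑(b - ξ)) * q ξ * y ξ) (Icc a b) ξ := by
    intro ξ hξ
    refine ((((h.hasDerivWithinAt ξ hξ).const_mul s).mul
      (Complex.hasDerivAt_cos_mul_sub s b ξ).hasDerivWithinAt).add
      ((h.hasDerivWithinAt_deriv ξ hξ).mul
        (Complex.hasDerivAt_sin_mul_sub s b ξ).hasDerivWithinAt)).congr_deriv ?_
    linear_combination (-Complex.sin (s * ↑(b - ξ))) * h.eq ξ hξ
  have hc := h.continuousOn
  rw [intervalIntegral.integral_eq_sub_of_hasDerivWithinAt_Icc hab hG (by fun_prop)]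
  simp

lemma deriv_eq_add_integral (h : IsSolutionOn q s a b y y' y'') (hq : ContinuousOn q (Icc a b))
    (hab : a ≤ b) :
    y' b = y' a * Complex.cos (s * ↑(b - a)) - s * y a * Complex.sin (s * ↑(b - a))
      + ∫ ξ in a..b, Complex.cos (s * ↑(b - ξ)) * q ξ * y ξ := by
  have hG : ∀ ξ ∈ Icc a b, HasDerivWithinAt
      (fun ξ => y' ξ * Complex.cos (s * ↑(b - ξ)) - s * y ξ * Complex.sin (s * ↑(b - ξ)))
      (Complex.cos (s * ↑(b - ξ)) * q ξ * y ξ) (Icc a b) ξ := by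
    intro ξ hξ
    refine (((h.hasDerivWithinAt_deriv ξ hξ).mul
      (Complex.hasDerivAt_cos_mul_sub s b ξ).hasDerivWithinAt).sub
      (((h.hasDerivWithinAt ξ hξ).const_mul s).mul
        (Complex.hasDerivAt_sin_mul_sub s b ξ).hasDerivWithinAt)).congr_deriv ?_
    linear_combination (-Complex.cos (s * ↑(b - ξ))) * h.eq ξ hξ
  have hc := h.continuousOn
  rw [intervalIntegral.integral_eq_sub_of_hasDerivWithinAt_Icc hab hG (by fun_prop)]
  simp

lemma norm_mul_sub_le (h : IsSolutionOn q s a b y y' y'') (hq : ContinuousOn q (Icc a b))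
    (hab : a ≤ b) {Q M : ℝ} (hQ : ∀ x ∈ Icc a b, ‖q x‖ ≤ Q)
    (hy : ∀ x ∈ Icc a b, ‖y x‖ ≤ M * rexp (|s.im| * (x - a))) :
    ‖s * y b - (s * y a * Complex.cos (s * ↑(b - a)) + y' a * Complex.sin (s * ↑(b - a)))‖
      ≤ Q * M * rexp (|s.im| * (b - a)) * (b - a) := by
  rw [h.mul_eq_add_integral hq hab, add_sub_cancel_left]
  exact norm_integral_le_of_kernel hab
    (fun ξ hξ => Complex.norm_sin_mul_ofReal_le_s16 s (sub_nonneg.2 hξ.2)) hQ hy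

lemma norm_deriv_sub_le (h : IsSolutionOn q s a b y y' y'') (hq : ContinuousOn q (Icc a b))
    (hab : a ≤ b) {Q M : ℝ} (hQ : ∀ x ∈ Icc a b, ‖q x‖ ≤ Q)
    (hy : ∀ x ∈ Icc a b, ‖y x‖ ≤ M * rexp (|s.im| * (x - a))) :
    ‖y' b - (y' a * Complex.cos (s * ↑(b - a)) - s * y a * Complex.sin (s * ↑(b - a)))‖
      ≤ Q * M * rexp (|s.im| * (b - a)) * (b - a) := by
  rw [h.deriv_eq_add_integral hq hab, add_sub_cancel_left]
  exact norm_integral_le_of_kernel hab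
    (fun ξ hξ => Complex.norm_cos_mul_ofReal_le s (sub_nonneg.2 hξ.2)) hQ hy

lemma norm_le_two_mul_exp (h : IsSolutionOn q s a b y y' y'') (hq : ContinuousOn q (Icc a b))
    (hab : a ≤ b) {Q : ℝ} (hQ : ∀ x ∈ Icc a b, ‖q x‖ ≤ Q) (hs : 2 * Q * (b - a) ≤ ‖s‖)
    (hs0 : s ≠ 0) :
    ∀ x ∈ Icc a b, ‖y x‖ ≤ 2 * (‖y a‖ + ‖y' a‖ / ‖s‖) * rexp (|s.im| * (x - a)) := by
  set t := |s.im|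
  obtain ⟨ξ₀, hξ₀, hmax⟩ := isCompact_Icc.exists_isMaxOn (nonempty_Icc.2 hab)
    (h.continuousOn.norm.mul (by fun_prop) :
      ContinuousOn (fun ξ => ‖y ξ‖ * rexp (-(t * (ξ - a)))) (Icc a b))
  set M := ‖y ξ₀‖ * rexp (-(t * (ξ₀ - a)))
  have hweight : ∀ x, ‖y x‖ = ‖y x‖ * rexp (-(t * (x - a))) * rexp (t * (x - a)) := fun x => by
    rw [mul_assoc, ← Real.exp_add, neg_add_cancel, Real.exp_zero, mul_one]
  have hbound : ∀ x ∈ Icc a b, ‖y x‖ ≤ M * rexp (t * (x - a)) := fun x hx => by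
    rw [hweight x]; gcongr; exact hmax hx
  have hsub : Icc a ξ₀ ⊆ Icc a b := Icc_subset_Icc_right hξ₀.2
  have hQ0 : 0 ≤ Q := (norm_nonneg _).trans (hQ a (left_mem_Icc.2 hab))
  have hs0' : 0 < ‖s‖ := norm_pos_iff.2 hs0
  set e := rexp (t * (ξ₀ - a))
  have hrem := (h.mono hξ₀).norm_mul_sub_le (hq.mono hsub) hξ₀.1 (fun x hx => hQ x (hsub hx))
    (fun x hx => hbound x (hsub hx))
  have hlead : ‖s * y a * Complex.cos (s * ↑(ξ₀ - a)) + y' a * Complex.sin (s * ↑(ξ₀ - a))‖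
      ≤ (‖s‖ * ‖y a‖ + ‖y' a‖) * e := by
    refine (norm_add_le _ _).trans ?_
    rw [norm_mul, norm_mul, norm_mul, add_mul]
    gcongr
    exacts [Complex.norm_cos_mul_ofReal_le s (sub_nonneg.2 hξ₀.1),
      Complex.norm_sin_mul_ofReal_le_s16 s (sub_nonneg.2 hξ₀.1)]
  have hhalf : Q * M * e * (ξ₀ - a) ≤ ‖s‖ * M * e / 2 := by
    have : Q * (ξ₀ - a) ≤ ‖s‖ / 2 := by nlinarith [hξ₀.2]
    have : 0 ≤ M * e := by positivity
    nlinarith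
  have hM : ‖s‖ * M * e ≤ 2 * (‖s‖ * ‖y a‖ + ‖y' a‖) * e := by
    have := norm_le_norm_add_norm_sub' (s * y ξ₀)
      (s * y a * Complex.cos (s * ↑(ξ₀ - a)) + y' a * Complex.sin (s * ↑(ξ₀ - a)))
    rw [norm_mul, hweight ξ₀] at this
    linarith
  intro x hx
  refine (hbound x hx).trans (mul_le_mul_of_nonneg_right ?_ (Real.exp_pos _).le)
  have hB : ‖s‖ * (2 * (‖y a‖ + ‖y' a‖ / ‖s‖)) = 2 * (‖s‖ * ‖y a‖ + ‖y' a‖) := by field_simp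
  rw [← mul_le_mul_iff_of_pos_left hs0', hB]
  exact le_of_mul_le_mul_right hM (Real.exp_pos _)

end IsSolutionOn

section Asymptotics

variable {q : ℝ → ℝ} {a b : ℝ} {y y' y'' : ℂ → ℝ → ℂ}

lemma isBigO_mul_sub (h : ∀ s, IsSolutionOn q s a b (y s) (y' s) (y'' s))
    (hq : ContinuousOn q (Icc a b)) (hab : a ≤ b) :
    (fun s => s * y s b
        - (s * y s a * Complex.cos (s * ↑(b - a)) + y' s a * Complex.sin (s * ↑(b - a))))
      =O[cobounded ℂ] fun s => (‖y s a‖ + ‖y' s a‖ / ‖s‖) * rexp (|s.im| * (b - a)) := by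
  obtain ⟨Q, hQ⟩ := isCompact_Icc.exists_bound_of_continuousOn hq
  refine IsBigO.of_bound (Q * 2 * (b - a)) ?_
  filter_upwards [eventually_cobounded_le_norm (2 * Q * (b - a)), eventually_ne_cobounded 0]
    with s hs hs0
  rw [Real.norm_of_nonneg (by positivity)]
  exact ((h s).norm_mul_sub_le hq hab hQ ((h s).norm_le_two_mul_exp hq hab hQ hs hs0)).trans_eq
    (by ring)

lemma isBigO_deriv_sub (h : ∀ s, IsSolutionOn q s a b (y s) (y' s) (y'' s))
    (hq : ContinuousOn q (Icc a b)) (hab : a ≤ b) :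
    (fun s => y' s b
        - (y' s a * Complex.cos (s * ↑(b - a)) - s * y s a * Complex.sin (s * ↑(b - a))))
      =O[cobounded ℂ] fun s => (‖y s a‖ + ‖y' s a‖ / ‖s‖) * rexp (|s.im| * (b - a)) := by
  obtain ⟨Q, hQ⟩ := isCompact_Icc.exists_bound_of_continuousOn hq
  refine IsBigO.of_bound (Q * 2 * (b - a)) ?_
  filter_upwards [eventually_cobounded_le_norm (2 * Q * (b - a)), eventually_ne_cobounded 0]
    with s hs hs0
  rw [Real.norm_of_nonneg (by positivity)]
  exact ((h s).norm_deriv_sub_le hq hab hQ ((h s).norm_le_two_mul_exp hq hab hQ hs hs0)).trans_eq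
    (by ring)

lemma isBigO_sub_mul_cos (h : ∀ s, IsSolutionOn q s a b (y s) (y' s) (y'' s))
    (hq : ContinuousOn q (Icc a b)) (hab : a ≤ b) {c : ℂ → ℂ} {g : ℂ → ℝ}
    (hy : (fun s => y s a - c s) =O[cobounded ℂ] fun s => ‖s‖⁻¹ * g s)
    (hy' : (fun s => y' s a) =O[cobounded ℂ] g) (hc : c =O[cobounded ℂ] g) :
    (fun s => y s b - c s * Complex.cos (s * ↑(b - a)))
      =O[cobounded ℂ] fun s => ‖s‖⁻¹ * g s * rexp (|s.im| * (b - a)) := by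
  have hℓ : 0 ≤ b - a := sub_nonneg.2 hab
  have hinit : (fun s => ‖y s a‖ + ‖y' s a‖ / ‖s‖) =O[cobounded ℂ] g :=
    (hy.of_sub_inv_norm_mul hc).norm_left.add <|
      (hy'.norm_left.mul isBigO_inv_norm_one).congr (fun _ => (div_eq_mul_inv _ _).symm)
        fun _ => mul_one _
  have hrem := (isBigO_mul_sub h hq hab).trans (hinit.mul (isBigO_refl _ _))
  have hsum := (((isBigO_inv_norm.mul hrem).congr_right fun _ => (mul_assoc _ _ _).symm).add
    (hy.mul (isBigO_cos_mul_ofReal hℓ _))).add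
    ((isBigO_inv_norm.mul (hy'.mul (isBigO_sin_mul_ofReal hℓ _))).congr_right
      fun _ => (mul_assoc _ _ _).symm)
  refine hsum.congr' ?_ EventuallyEq.rfl
  filter_upwards [eventually_ne_cobounded 0] with s hs
  field_simp
  ring

lemma isBigO_of_left_eq_zero (h : ∀ s, IsSolutionOn q s a b (y s) (y' s) (y'' s))
    (hq : ContinuousOn q (Icc a b)) (hab : a ≤ b) {c : ℂ} (hy : ∀ s, y s a = 0)
    (hy' : ∀ s, y' s a = c) :
    (fun s => y s b) =O[cobounded ℂ] fun s => ‖s‖⁻¹ * rexp (|s.im| * (b - a)) := by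
  have := isBigO_sub_mul_cos h hq hab (c := 0) (g := fun _ => 1) (by simp [hy, isBigO_zero])
    ((isBigO_const_const c one_ne_zero _).congr_left fun s => (hy' s).symm) (isBigO_zero _ _)
  simpa using this

lemma isBigO_deriv_sub_of_left_eq_zero (h : ∀ s, IsSolutionOn q s a b (y s) (y' s) (y'' s))
    (hq : ContinuousOn q (Icc a b)) (hab : a ≤ b) {c : ℂ} (hy : ∀ s, y s a = 0)
    (hy' : ∀ s, y' s a = c) :
    (fun s => y' s b - c * Complex.cos (s * ↑(b - a)))
      =O[cobounded ℂ] fun s => ‖s‖⁻¹ * rexp (|s.im| * (b - a)) := by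
  have := isBigO_deriv_sub h hq hab
  simp only [hy, hy', mul_zero, zero_mul, sub_zero, norm_zero, zero_add] at this
  exact this.trans <| (isBigO_const_mul_self ‖c‖ _ _).congr_left fun _ => by
    rw [div_eq_mul_inv, mul_assoc]

end Asymptotics

end SturmLiouville

open SturmLiouville in
theorem w_asymptotics_case_iv_general
    (q : ℝ → ℝ) (hq : ContinuousOn q (Set.Icc (-π) π))
    (α β : ℝ) (hβ : Real.sin β = 0)
    (a₁ a₂ a₃ a₄ b₁ b₂ b₃ b₄ : ℝ)
    (hρ12 : a₁ * b₂ - a₂ * b₁ ≠ 0)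
    (φ₁ φ₁' φ₁'' φ₂ φ₂' φ₂'' : ℂ → ℝ → ℂ)
    -- φ₁ solves the equation on [-π,0] with the initial conditions
    (hd1 : ∀ s : ℂ, ∀ x ∈ Set.Icc (-π) 0,
      HasDerivWithinAt (φ₁ s) (φ₁' s x) (Set.Icc (-π) 0) x)
    (hd1' : ∀ s : ℂ, ∀ x ∈ Set.Icc (-π) 0,
      HasDerivWithinAt (φ₁' s) (φ₁'' s x) (Set.Icc (-π) 0) x)
    (heq1 : ∀ s : ℂ, ∀ x ∈ Set.Icc (-π) 0,
      -φ₁'' s x + (q x : ℂ) * φ₁ s x = s ^ 2 * φ₁ s x)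
    (hi : ∀ s : ℂ, φ₁ s (-π) = 0)
    (hi' : ∀ s : ℂ, φ₁' s (-π) = -(Real.cos α : ℂ))
    -- φ₂ solves the equation on [0,π] with the matching conditions
    (hd2 : ∀ s : ℂ, ∀ x ∈ Set.Icc 0 π,
      HasDerivWithinAt (φ₂ s) (φ₂' s x) (Set.Icc 0 π) x)
    (hd2' : ∀ s : ℂ, ∀ x ∈ Set.Icc 0 π,
      HasDerivWithinAt (φ₂' s) (φ₂'' s x) (Set.Icc 0 π) x)
    (heq2 : ∀ s : ℂ, ∀ x ∈ Set.Icc 0 π,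
      -φ₂'' s x + (q x : ℂ) * φ₂ s x = s ^ 2 * φ₂ s x)
    (hm : ∀ s : ℂ, φ₂ s 0 = (((a₂ * b₃ - a₃ * b₂ : ℝ) : ℂ) * φ₁ s 0
      + ((a₂ * b₄ - a₄ * b₂ : ℝ) : ℂ) * φ₁' s 0) / ((a₁ * b₂ - a₂ * b₁ : ℝ) : ℂ))
    (hm' : ∀ s : ℂ, φ₂' s 0 = -(((a₁ * b₃ - a₃ * b₁ : ℝ) : ℂ) * φ₁ s 0
      + ((a₁ * b₄ - a₄ * b₁ : ℝ) : ℂ) * φ₁' s 0) / ((a₁ * b₂ - a₂ * b₁ : ℝ) : ℂ)) :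
    ∃ C > 0, ∃ R > 0, ∀ s : ℂ, R ≤ ‖s‖ →
      ‖(((a₁ * b₂ - a₂ * b₁ : ℝ) : ℂ)
          * ((Real.cos β : ℂ) * φ₂ s π + (Real.sin β : ℂ) * φ₂' s π)
        + ((a₂ * b₄ - a₄ * b₂ : ℝ) : ℂ) * (Real.cos α : ℂ) * (Real.cos β : ℂ)
          * Complex.cos (s * π) ^ 2)‖
        ≤ C * ‖s‖⁻¹ * Real.exp (2 * π * |s.im|) := by
  have hπ := pi_pos
  have hr12 : ((a₁ * b₂ - a₂ * b₁ : ℝ) : ℂ) ≠ 0 := Complex.ofReal_ne_zero.2 hρ12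
  have hsol₁ : ∀ s, IsSolutionOn q s (-π) 0 (φ₁ s) (φ₁' s) (φ₁'' s) :=
    fun s => ⟨hd1 s, hd1' s, heq1 s⟩
  have hsol₂ : ∀ s, IsSolutionOn q s 0 π (φ₂ s) (φ₂' s) (φ₂'' s) :=
    fun s => ⟨hd2 s, hd2' s, heq2 s⟩
  have hq₁ := hq.mono (Icc_subset_Icc_right hπ.le)
  have hq₂ := hq.mono (Icc_subset_Icc_left (neg_nonpos.2 hπ.le))
  have hφ₁ := isBigO_of_left_eq_zero hsol₁ hq₁ (neg_nonpos.2 hπ.le) hi hi'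
  have hφ₁' := isBigO_deriv_sub_of_left_eq_zero hsol₁ hq₁ (neg_nonpos.2 hπ.le) hi hi'
  simp only [sub_neg_eq_add, zero_add] at hφ₁ hφ₁'
  have hcos := isBigO_cos_mul_ofReal hπ.le (cobounded ℂ)
  set r₁₂ : ℂ := ((a₁ * b₂ - a₂ * b₁ : ℝ) : ℂ)
  set c : ℂ → ℂ := fun s => -(((a₂ * b₄ - a₄ * b₂ : ℝ) : ℂ) / r₁₂ * Real.cos α)
    * Complex.cos (s * π) with hc
  have hφ₂ : (fun s => φ₂ s 0 - c s) =O[cobounded ℂ] fun s => ‖s‖⁻¹ * rexp (|s.im| * π) :=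
    ((hφ₁.const_mul_left (((a₂ * b₃ - a₃ * b₂ : ℝ) : ℂ) / r₁₂)).add
      (hφ₁'.const_mul_left (((a₂ * b₄ - a₄ * b₂ : ℝ) : ℂ) / r₁₂))).congr_left fun s => by
        rw [hm s, hc]; field_simp; ring
  have hφ₂' : (fun s => φ₂' s 0) =O[cobounded ℂ] fun s => rexp (|s.im| * π) :=
    ((hφ₁.of_inv_norm_mul.const_mul_left (-((a₁ * b₃ - a₃ * b₁ : ℝ) : ℂ) / r₁₂)).add
      ((hφ₁'.of_sub_inv_norm_mul (hcos.const_mul_left _)).const_mul_left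
        (-((a₁ * b₄ - a₄ * b₁ : ℝ) : ℂ) / r₁₂))).congr_left fun s => by
      rw [hm' s]; field_simp; ring
  have hw := isBigO_sub_mul_cos hsol₂ hq₂ hπ.le hφ₂ hφ₂' (hcos.const_mul_left _)
  simp only [sub_zero] at hw
  obtain ⟨C, hC, R, hR, hb⟩ :=
    exists_pos_bound_of_isBigO_cobounded (hw.const_mul_left (r₁₂ * Real.cos β))
  refine ⟨C, hC, R, hR, fun s hs => (congrArg norm ?_).trans_le ((hb s hs).trans_eq ?_)⟩
  · rw [hβ, Complex.ofReal_zero, hc]; field_simp; ring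
  · rw [Real.norm_of_nonneg (by positivity), mul_assoc, mul_assoc, ← Real.exp_add]
    ring_nf

/-- Asymptotics of the characteristic function
`w(λ) = ρ₁₂·(cos β·φ₂(π,λ) + sin β·φ₂'(π,λ)) = ρ₁₂·cos β·φ₂(π,λ)` when
`sin α = 0`, `sin β = 0` and `ρ₂₄ ≠ 0`:
`|w(λ) + ρ₂₄·cos α·cos β·cos²(sπ)| ≤ C·|s|⁻¹·e^{2π|t|}` for `|s| ≥ R`, where
`λ = s²`, `t = Im s`. -/
theorem w_asymptotics_case_iv
    (q : ℝ → ℝ) (hq : ContinuousOn q (Set.Icc (-π) π))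
    (α β : ℝ) (hα : Real.sin α = 0) (hβ : Real.sin β = 0)
    (a₁ a₂ a₃ a₄ b₁ b₂ b₃ b₄ : ℝ)
    (hρ12 : a₁ * b₂ - a₂ * b₁ ≠ 0) (hρ24 : a₂ * b₄ - a₄ * b₂ ≠ 0)
    (φ₁ φ₁' φ₁'' φ₂ φ₂' φ₂'' : ℂ → ℝ → ℂ)
    -- φ₁ solves the equation on [-π,0] with the initial conditions
    (hd1 : ∀ s : ℂ, ∀ x ∈ Set.Icc (-π) 0,
      HasDerivWithinAt (φ₁ s) (φ₁' s x) (Set.Icc (-π) 0) x)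
    (hd1' : ∀ s : ℂ, ∀ x ∈ Set.Icc (-π) 0,
      HasDerivWithinAt (φ₁' s) (φ₁'' s x) (Set.Icc (-π) 0) x)
    (heq1 : ∀ s : ℂ, ∀ x ∈ Set.Icc (-π) 0,
      -φ₁'' s x + (q x : ℂ) * φ₁ s x = s ^ 2 * φ₁ s x)
    (hi : ∀ s : ℂ, φ₁ s (-π) = 0)
    (hi' : ∀ s : ℂ, φ₁' s (-π) = -(Real.cos α : ℂ))
    -- φ₂ solves the equation on [0,π] with the matching conditions
    (hd2 : ∀ s : ℂ, ∀ x ∈ Set.Icc 0 π,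
      HasDerivWithinAt (φ₂ s) (φ₂' s x) (Set.Icc 0 π) x)
    (hd2' : ∀ s : ℂ, ∀ x ∈ Set.Icc 0 π,
      HasDerivWithinAt (φ₂' s) (φ₂'' s x) (Set.Icc 0 π) x)
    (heq2 : ∀ s : ℂ, ∀ x ∈ Set.Icc 0 π,
      -φ₂'' s x + (q x : ℂ) * φ₂ s x = s ^ 2 * φ₂ s x)
    (hm : ∀ s : ℂ, φ₂ s 0 = (((a₂ * b₃ - a₃ * b₂ : ℝ) : ℂ) * φ₁ s 0
      + ((a₂ * b₄ - a₄ * b₂ : ℝ) : ℂ) * φ₁' s 0) / ((a₁ * b₂ - a₂ * b₁ : ℝ) : ℂ))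
    (hm' : ∀ s : ℂ, φ₂' s 0 = -(((a₁ * b₃ - a₃ * b₁ : ℝ) : ℂ) * φ₁ s 0
      + ((a₁ * b₄ - a₄ * b₁ : ℝ) : ℂ) * φ₁' s 0) / ((a₁ * b₂ - a₂ * b₁ : ℝ) : ℂ)) :
    ∃ C > 0, ∃ R > 0, ∀ s : ℂ, R ≤ ‖s‖ →
      ‖(((a₁ * b₂ - a₂ * b₁ : ℝ) : ℂ)
          * ((Real.cos β : ℂ) * φ₂ s π + (Real.sin β : ℂ) * φ₂' s π)
        + ((a₂ * b₄ - a₄ * b₂ : ℝ) : ℂ) * (Real.cos α : ℂ) * (Real.cos β : ℂ)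
          * Complex.cos (s * π) ^ 2)‖
        ≤ C * ‖s‖⁻¹ * Real.exp (2 * π * |s.im|) :=
  w_asymptotics_case_iv_general q hq α β hβ a₁ a₂ a₃ a₄ b₁ b₂ b₃ b₄ hρ12 φ₁ φ₁' φ₁'' φ₂ φ₂' φ₂'' hd1
    hd1' heq1 hi hi' hd2 hd2' heq2 hm hm'
end

section
/- Suppose sin α ≠ 0, sin β ≠ 0, ρ₂₄ ≠ 0, and let s_n satisfy s_n = (n - 1/2) + O(1/n). Let φ_{s_n} denote the eigenfunction φ₁(·, s_n²) on [-π,0]. Then φ_{s_n}(x) = sin α·cos((n - 1/2)(x+π)) + O(1/n) uniformly in x ∈ [-π,0]: there exist C, N such that for all n ≥ N and all x ∈ [-π,0], |φ_{s_n}(x) - sin α·cos((n-1/2)(x+π))| ≤ C/n. -/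
/-!
Put `θ = s (x + π)` with `s = s_n`. In the frame rotating with angle `θ`, the pair
`(s φ, φ')` becomes a vector `w` whose derivative is `(-sin θ, cos θ) · q φ`: the rotation
absorbs the free equation `-φ'' = s² φ` exactly. Rotating `w - w(-π)` back gives `s (φ - y)`,
where `y = sin α cos θ - (cos α / s) sin θ` is the free solution with the same initial data.
As `|φ| ≤ |y| + 2 |w - w(-π)|` for `s ≥ 1`, Grönwall bounds `w - w(-π)` independently of `s`,
so `φ = y + O(1/s)`. Finally `|cos θ - cos ((n - 1/2)(x + π))| ≤ π |s_n - (n - 1/2)|`, which is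
`O(1/n)`, and `s_n ≥ n/2` for large `n`.
-/

open Real Set Filter

noncomputable def freeSolution (s a : ℝ) (c₀ c₁ : ℂ) (t : ℝ) : ℂ :=
  c₀ * Real.cos (s * (t - a)) + c₁ / s * Real.sin (s * (t - a))

noncomputable def rotatingFrame (s a : ℝ) (f f' : ℝ → ℂ) (t : ℝ) : ℂ × ℂ :=
  (s * (Real.cos (s * (t - a)) * f t) - Real.sin (s * (t - a)) * f' t,
    s * (Real.sin (s * (t - a)) * f t) + Real.cos (s * (t - a)) * f' t)

section Phase

variable (s a t : ℝ)

lemma hasDerivAt_ofReal_cos_phase :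
    HasDerivAt (fun t : ℝ => ((Real.cos (s * (t - a)) : ℝ) : ℂ))
      (-s * Real.sin (s * (t - a))) t := by
  have hphase : HasDerivAt (fun t : ℝ => s * (t - a)) s t := by
    simpa using ((hasDerivAt_id t).sub_const a).const_mul s
  exact ((Real.hasDerivAt_cos _).comp t hphase).ofReal_comp.congr_deriv (by push_cast; ring)

lemma hasDerivAt_ofReal_sin_phase :
    HasDerivAt (fun t : ℝ => ((Real.sin (s * (t - a)) : ℝ) : ℂ))
      (s * Real.cos (s * (t - a))) t := by
  have hphase : HasDerivAt (fun t : ℝ => s * (t - a)) s t := by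
    simpa using ((hasDerivAt_id t).sub_const a).const_mul s
  exact ((Real.hasDerivAt_sin _).comp t hphase).ofReal_comp.congr_deriv (by push_cast; ring)

end Phase

lemma hasDerivWithinAt_rotatingFrame {s a t : ℝ} {S : Set ℝ} {f f' : ℝ → ℂ} {f'' : ℂ}
    (hf : HasDerivWithinAt f (f' t) S t) (hf' : HasDerivWithinAt f' f'' S t) :
    HasDerivWithinAt (rotatingFrame s a f f')
      (-Real.sin (s * (t - a)) * (f'' + s ^ 2 * f t),
        Real.cos (s * (t - a)) * (f'' + s ^ 2 * f t)) S t := by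
  have hcos := (hasDerivAt_ofReal_cos_phase s a t).hasDerivWithinAt (s := S)
  have hsin := (hasDerivAt_ofReal_sin_phase s a t).hasDerivWithinAt (s := S)
  exact ((((hcos.mul hf).const_mul (s : ℂ)).sub (hsin.mul hf')).prodMk
    (((hsin.mul hf).const_mul (s : ℂ)).add (hcos.mul hf'))).congr_deriv (by ext <;> ring)

lemma rotatingFrame_self (s a : ℝ) (f f' : ℝ → ℂ) :
    rotatingFrame s a f f' a = (s * f a, f' a) := by
  simp [rotatingFrame]

lemma mul_sub_freeSolution_eq {s : ℝ} (hs : s ≠ 0) (a t : ℝ) (f f' : ℝ → ℂ) :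
    s * (f t - freeSolution s a (f a) (f' a) t) =
      Real.cos (s * (t - a)) * (rotatingFrame s a f f' t - rotatingFrame s a f f' a).1 +
        Real.sin (s * (t - a)) * (rotatingFrame s a f f' t - rotatingFrame s a f f' a).2 := by
  have hpyth :
      ((Real.cos (s * (t - a)) : ℝ) : ℂ) ^ 2 + ((Real.sin (s * (t - a)) : ℝ) : ℂ) ^ 2 = 1 := by
    exact_mod_cast Real.cos_sq_add_sin_sq _
  have hs' : (s : ℂ) ≠ 0 := by exact_mod_cast hs
  rw [rotatingFrame_self]
  simp only [freeSolution, rotatingFrame, Prod.fst_sub, Prod.snd_sub]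
  field_simp
  linear_combination -(s * f t) * hpyth

lemma norm_neg_sin_mul_cos_mul_le (θ : ℝ) (z : ℂ) :
    ‖((-Real.sin θ * z, Real.cos θ * z) : ℂ × ℂ)‖ ≤ ‖z‖ := by
  rw [Prod.norm_def, neg_mul, norm_neg, norm_mul, norm_mul, Complex.norm_real,
    Complex.norm_real, Real.norm_eq_abs, Real.norm_eq_abs]
  exact max_le (mul_le_of_le_one_left (norm_nonneg z) (abs_sin_le_one θ))
    (mul_le_of_le_one_left (norm_nonneg z) (abs_cos_le_one θ))

lemma mul_norm_sub_freeSolution_le {s : ℝ} (hs : 0 < s) (a t : ℝ) (f f' : ℝ → ℂ) :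
    s * ‖f t - freeSolution s a (f a) (f' a) t‖ ≤
      2 * ‖rotatingFrame s a f f' t - rotatingFrame s a f f' a‖ := by
  set v := rotatingFrame s a f f' t - rotatingFrame s a f f' a
  calc s * ‖f t - freeSolution s a (f a) (f' a) t‖
      = ‖Real.cos (s * (t - a)) * v.1 + Real.sin (s * (t - a)) * v.2‖ := by
        rw [← mul_sub_freeSolution_eq hs.ne', norm_mul, Complex.norm_real,
          Real.norm_of_nonneg hs.le]
    _ ≤ ‖v.1‖ + ‖v.2‖ := by
        refine (norm_add_le _ _).trans (add_le_add ?_ ?_) <;>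
          rw [norm_mul, Complex.norm_real, Real.norm_eq_abs]
        · exact mul_le_of_le_one_left (norm_nonneg _) (abs_cos_le_one _)
        · exact mul_le_of_le_one_left (norm_nonneg _) (abs_sin_le_one _)
    _ ≤ 2 * ‖v‖ := by linarith [norm_fst_le v, norm_snd_le v]

lemma norm_freeSolution_le {s : ℝ} (hs : 1 ≤ s) (a t : ℝ) (c₀ c₁ : ℂ) :
    ‖freeSolution s a c₀ c₁ t‖ ≤ ‖c₀‖ + ‖c₁‖ := by
  have hs0 : 0 < s := one_pos.trans_le hs
  refine (norm_add_le _ _).trans (add_le_add ?_ ?_) <;>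
    rw [norm_mul, Complex.norm_real, Real.norm_eq_abs]
  · exact mul_le_of_le_one_right (norm_nonneg _) (abs_cos_le_one _)
  · rw [norm_div, Complex.norm_real, Real.norm_of_nonneg hs0.le]
    calc ‖c₁‖ / s * |Real.sin (s * (t - a))| ≤ ‖c₁‖ / s :=
          mul_le_of_le_one_right (by positivity) (abs_sin_le_one _)
      _ ≤ ‖c₁‖ := div_le_self (norm_nonneg _) hs

lemma norm_freeSolution_sub_cos_le {s : ℝ} (hs : 0 < s) (m a t : ℝ) (c₀ c₁ : ℂ) :
    ‖freeSolution s a c₀ c₁ t - c₀ * Real.cos (m * (t - a))‖ ≤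
      ‖c₀‖ * (|s - m| * |t - a|) + ‖c₁‖ / s := by
  have hcos : |Real.cos (s * (t - a)) - Real.cos (m * (t - a))| ≤ |s - m| * |t - a| := by
    rw [← abs_mul, sub_mul]
    exact abs_cos_sub_cos_le _ _
  calc ‖freeSolution s a c₀ c₁ t - c₀ * Real.cos (m * (t - a))‖
      = ‖c₀ * ((Real.cos (s * (t - a)) - Real.cos (m * (t - a)) : ℝ) : ℂ)
          + c₁ / s * Real.sin (s * (t - a))‖ := by
        rw [freeSolution]; push_cast; ring_nf
    _ ≤ ‖c₀‖ * (|s - m| * |t - a|) + ‖c₁‖ / s := by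
        refine (norm_add_le _ _).trans (add_le_add ?_ ?_) <;>
          rw [norm_mul, Complex.norm_real, Real.norm_eq_abs]
        · gcongr
        · rw [norm_div, Complex.norm_real, Real.norm_of_nonneg hs.le]
          exact mul_le_of_le_one_right (by positivity) (abs_sin_le_one _)

lemma gronwallBound_nonneg {K ε x : ℝ} (hK : 0 ≤ K) (hε : 0 ≤ ε) (hx : 0 ≤ x) :
    0 ≤ gronwallBound 0 K ε x :=
  (gronwallBound_x0 0 K ε).symm.le.trans (gronwallBound_mono le_rfl hε hK hx)

theorem norm_sub_freeSolution_le_gronwallBound {q : ℝ → ℝ} {f f' f'' : ℝ → ℂ}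
    {a b s M : ℝ}
    (hs : 1 ≤ s) (hM : 0 ≤ M) (hqM : ∀ x ∈ Icc a b, |q x| ≤ M)
    (hf : ∀ x ∈ Icc a b, HasDerivWithinAt f (f' x) (Icc a b) x)
    (hf' : ∀ x ∈ Icc a b, HasDerivWithinAt f' (f'' x) (Icc a b) x)
    (heq : ∀ x ∈ Icc a b, -f'' x + q x * f x = (s : ℂ) ^ 2 * f x) :
    ∀ x ∈ Icc a b, ‖f x - freeSolution s a (f a) (f' a) x‖ ≤
      2 * gronwallBound 0 (2 * M) (M * (‖f a‖ + ‖f' a‖)) (b - a) / s := by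
  have hs0 : 0 < s := one_pos.trans_le hs
  set A := ‖f a‖ + ‖f' a‖
  set g := fun t => rotatingFrame s a f f' t - rotatingFrame s a f f' a
  have hg : ∀ t ∈ Icc a b, HasDerivWithinAt g
      (-Real.sin (s * (t - a)) * (q t * f t), Real.cos (s * (t - a)) * (q t * f t))
      (Icc a b) t := by
    intro t ht
    have hforce : f'' t + s ^ 2 * f t = q t * f t := by linear_combination -heq t ht
    have h := (hasDerivWithinAt_rotatingFrame (s := s) (a := a) (hf t ht) (hf' t ht)).sub_const
      (rotatingFrame s a f f' a)
    rwa [hforce] at h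
  have hf_le : ∀ t, ‖f t‖ ≤ 2 * ‖g t‖ + A := fun t =>
    calc ‖f t‖
        ≤ ‖f t - freeSolution s a (f a) (f' a) t‖ + ‖freeSolution s a (f a) (f' a) t‖ :=
          norm_le_norm_sub_add _ _
      _ ≤ s * ‖f t - freeSolution s a (f a) (f' a) t‖ + A :=
          add_le_add (le_mul_of_one_le_left (norm_nonneg _) hs) (norm_freeSolution_le hs a t _ _)
      _ ≤ 2 * ‖g t‖ + A := add_le_add_left (mul_norm_sub_freeSolution_le hs0 a t f f') A
  have hgronwall := norm_le_gronwallBound_of_norm_deriv_right_le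
    (δ := 0) (K := 2 * M) (ε := M * A)
    (fun t ht => (hg t ht).continuousWithinAt)
    (fun t ht => (hg t (Ico_subset_Icc_self ht)).mono_of_mem_nhdsWithin (Icc_mem_nhdsGE_of_mem ht))
    (by simp [g]) fun t ht => by
      calc _ ≤ ‖(q t : ℂ) * f t‖ := norm_neg_sin_mul_cos_mul_le _ _
        _ ≤ M * (2 * ‖g t‖ + A) := by
          rw [norm_mul, Complex.norm_real, Real.norm_eq_abs]
          exact mul_le_mul (hqM t (Ico_subset_Icc_self ht)) (hf_le t) (norm_nonneg _) hM
        _ = 2 * M * ‖g t‖ + M * A := by ring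
  intro x hx
  rw [le_div_iff₀ hs0, mul_comm]
  calc s * ‖f x - freeSolution s a (f a) (f' a) x‖ ≤ 2 * ‖g x‖ :=
        mul_norm_sub_freeSolution_le hs0 a x f f'
    _ ≤ 2 * gronwallBound 0 (2 * M) (M * A) (b - a) := by
        gcongr
        refine (hgronwall x hx).trans (gronwallBound_mono le_rfl (by positivity) (by positivity) ?_)
        linarith [hx.2]

theorem norm_sub_mul_cos_le {q : ℝ → ℝ} {f f' f'' : ℝ → ℂ} {a b s M : ℝ}
    (hs : 1 ≤ s) (hM : 0 ≤ M) (hqM : ∀ x ∈ Icc a b, |q x| ≤ M)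
    (hf : ∀ x ∈ Icc a b, HasDerivWithinAt f (f' x) (Icc a b) x)
    (hf' : ∀ x ∈ Icc a b, HasDerivWithinAt f' (f'' x) (Icc a b) x)
    (heq : ∀ x ∈ Icc a b, -f'' x + q x * f x = (s : ℂ) ^ 2 * f x) (m : ℝ) :
    ∀ x ∈ Icc a b, ‖f x - f a * Real.cos (m * (x - a))‖ ≤
      (2 * gronwallBound 0 (2 * M) (M * (‖f a‖ + ‖f' a‖)) (b - a) + ‖f' a‖) / s +
        ‖f a‖ * |s - m| * (b - a) := by
  intro x hx
  have hs0 : 0 < s := one_pos.trans_le hs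
  have hxa : |x - a| ≤ b - a := by
    rw [abs_of_nonneg (by linarith [hx.1])]
    linarith [hx.2]
  calc _ ≤ ‖f x - freeSolution s a (f a) (f' a) x‖
        + ‖freeSolution s a (f a) (f' a) x - f a * Real.cos (m * (x - a))‖ :=
        norm_sub_le_norm_sub_add_norm_sub _ _ _
    _ ≤ 2 * gronwallBound 0 (2 * M) (M * (‖f a‖ + ‖f' a‖)) (b - a) / s +
        (‖f a‖ * (|s - m| * (b - a)) + ‖f' a‖ / s) := by
        gcongr
        · exact norm_sub_freeSolution_le_gronwallBound hs hM hqM hf hf' heq x hx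
        · exact (norm_freeSolution_sub_cos_le hs0 m a x _ _).trans (by gcongr)
    _ = _ := by ring

lemma eventually_half_le_of_abs_sub_le {sn : ℕ → ℝ} {C₀ : ℝ} {N₀ : ℕ}
    (hsn : ∀ n : ℕ, N₀ ≤ n → |sn n - ((n : ℝ) - 1 / 2)| ≤ C₀ / n) :
    ∀ᶠ n : ℕ in atTop, 1 ≤ (n : ℝ) / 2 ∧ (n : ℝ) / 2 ≤ sn n ∧
      |sn n - ((n : ℝ) - 1 / 2)| ≤ C₀ / n := by
  filter_upwards [eventually_ge_atTop N₀, eventually_ge_atTop 3,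
    (tendsto_const_div_atTop_nhds_zero_nat C₀).eventually_le_const one_pos]
    with n hnN₀ hn hC₀n
  have hn' : (3 : ℝ) ≤ n := by exact_mod_cast hn
  have := abs_le.1 (hsn n hnN₀)
  exact ⟨by linarith, by linarith, hsn n hnN₀⟩

theorem eigenfunction_asymptotics_case_i_general
    (q : ℝ → ℝ) (hq : ContinuousOn q (Set.Icc (-π) π))
    (α : ℝ)
    (φ₁ φ₁' φ₁'' : ℂ → ℝ → ℂ)
    (hd : ∀ s : ℂ, ∀ x ∈ Set.Icc (-π) 0,
      HasDerivWithinAt (φ₁ s) (φ₁' s x) (Set.Icc (-π) 0) x)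
    (hd' : ∀ s : ℂ, ∀ x ∈ Set.Icc (-π) 0,
      HasDerivWithinAt (φ₁' s) (φ₁'' s x) (Set.Icc (-π) 0) x)
    (heq : ∀ s : ℂ, ∀ x ∈ Set.Icc (-π) 0,
      -φ₁'' s x + (q x : ℂ) * φ₁ s x = s ^ 2 * φ₁ s x)
    (hi : ∀ s : ℂ, φ₁ s (-π) = (Real.sin α : ℂ))
    (hi' : ∀ s : ℂ, φ₁' s (-π) = -(Real.cos α : ℂ))
    -- the sequence s_n satisfies s_n = (n - 1/2) + O(1/n)
    (sn : ℕ → ℝ) (C₀ : ℝ) (N₀ : ℕ)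
    (hsn : ∀ n : ℕ, N₀ ≤ n → |sn n - ((n : ℝ) - 1 / 2)| ≤ C₀ / n) :
    ∃ C : ℝ, ∃ N : ℕ, ∀ n : ℕ, N ≤ n → ∀ x ∈ Set.Icc (-π) 0,
      ‖φ₁ ((sn n : ℝ) : ℂ) x
          - (Real.sin α : ℂ) * Real.cos (((n : ℝ) - 1 / 2) * (x + π))‖
        ≤ C / n := by
  obtain ⟨M₀, hM₀⟩ := isCompact_Icc.exists_bound_of_continuousOn hq
  have hqM : ∀ x ∈ Icc (-π) 0, |q x| ≤ max M₀ 0 := fun x hx =>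
    (hM₀ x ⟨hx.1, hx.2.trans pi_pos.le⟩).trans (le_max_left _ _)
  set D := 2 * gronwallBound 0 (2 * max M₀ 0) (max M₀ 0 * (|Real.sin α| + |Real.cos α|)) π +
    |Real.cos α|
  obtain ⟨N, hN⟩ := eventually_atTop.1 (eventually_half_le_of_abs_sub_le hsn)
  refine ⟨2 * D + |Real.sin α| * C₀ * π, N, fun n hn x hx => ?_⟩
  obtain ⟨hhalf, hs, hsn'⟩ := hN n hn
  have hbound := norm_sub_mul_cos_le (hhalf.trans hs) (le_max_right _ _) hqM (hd _) (hd' _) (heq _)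
    ((n : ℝ) - 1 / 2) x hx
  simp only [hi, hi', sub_neg_eq_add, zero_add, norm_neg, Complex.norm_real, Real.norm_eq_abs]
    at hbound
  have hD : 0 ≤ D := add_nonneg (mul_nonneg zero_le_two
    (gronwallBound_nonneg (by positivity) (by positivity) pi_pos.le)) (abs_nonneg _)
  calc _ ≤ D / sn n + |Real.sin α| * |sn n - ((n : ℝ) - 1 / 2)| * π := hbound
    _ ≤ D / (n / 2) + |Real.sin α| * (C₀ / n) * π := by gcongr
    _ = (2 * D + |Real.sin α| * C₀ * π) / n := by ring

/-- Eigenfunction asymptotics in the case `sin α ≠ 0`, `sin β ≠ 0`, `ρ₂₄ ≠ 0`: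
if `s_n = (n - 1/2) + O(1/n)`, then the eigenfunctions
`φ_{s_n} = φ₁(·, s_n²)` satisfy
`φ_{s_n}(x) = sin α·cos((n - 1/2)(x+π)) + O(1/n)` uniformly in `x ∈ [-π,0]`. -/
theorem eigenfunction_asymptotics_case_i
    (q : ℝ → ℝ) (hq : ContinuousOn q (Set.Icc (-π) π))
    (α β : ℝ) (hα : Real.sin α ≠ 0) (hβ : Real.sin β ≠ 0)
    (a₁ a₂ a₃ a₄ b₁ b₂ b₃ b₄ : ℝ) (hρ24 : a₂ * b₄ - a₄ * b₂ ≠ 0)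
    (φ₁ φ₁' φ₁'' : ℂ → ℝ → ℂ)
    (hd : ∀ s : ℂ, ∀ x ∈ Set.Icc (-π) 0,
      HasDerivWithinAt (φ₁ s) (φ₁' s x) (Set.Icc (-π) 0) x)
    (hd' : ∀ s : ℂ, ∀ x ∈ Set.Icc (-π) 0,
      HasDerivWithinAt (φ₁' s) (φ₁'' s x) (Set.Icc (-π) 0) x)
    (heq : ∀ s : ℂ, ∀ x ∈ Set.Icc (-π) 0,
      -φ₁'' s x + (q x : ℂ) * φ₁ s x = s ^ 2 * φ₁ s x)
    (hi : ∀ s : ℂ, φ₁ s (-π) = (Real.sin α : ℂ))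
    (hi' : ∀ s : ℂ, φ₁' s (-π) = -(Real.cos α : ℂ))
    -- the sequence s_n satisfies s_n = (n - 1/2) + O(1/n)
    (sn : ℕ → ℝ) (C₀ : ℝ) (N₀ : ℕ)
    (hsn : ∀ n : ℕ, N₀ ≤ n → |sn n - ((n : ℝ) - 1 / 2)| ≤ C₀ / n) :
    ∃ C : ℝ, ∃ N : ℕ, ∀ n : ℕ, N ≤ n → ∀ x ∈ Set.Icc (-π) 0,
      ‖φ₁ ((sn n : ℝ) : ℂ) x
          - (Real.sin α : ℂ) * Real.cos (((n : ℝ) - 1 / 2) * (x + π))‖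
        ≤ C / n :=
  eigenfunction_asymptotics_case_i_general q hq α φ₁ φ₁' φ₁'' hd hd' heq hi hi' sn C₀ N₀ hsn
end
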